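/- arXiv:0712.0206 — 12 statements merged into one kernel-verified Lean document; each statement's English description precedes it below -/
import Mathlib

section
/- Let ν be a nonzero Lévy measure on ℝ^d. Then there exist a Borel measure λ on the unit sphere S = {ξ ∈ ℝ^d : |ξ| = 1} with 0 < λ(S) ≤ ∞ and a family {ν_ξ : ξ ∈ S} of Borel measures on (0,∞) such that ξ ↦ ν_ξ(B) is measurable for every Borel set B ⊆ (0,∞), 0 < ν_ξ((0,∞)) ≤ ∞ for every ξ ∈ S, and ν(B) = ∫_S (∫₀^∞ 1_B(rξ) ν_ξ(dr)) λ(dξ) for every Borel set B ⊆ ℝ^d ∖ {0}. -/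
/-!
Weighting `ν` by `w(x) = min(‖x‖², 1)` gives a finite measure `μ = w • ν`. Its image under the
polar map `x ↦ (x / ‖x‖, ‖x‖)` is a finite measure on `S × ℝ`, which disintegrates over its
marginal `λ` on the sphere into Markov kernels `κ_ξ` on the radius. Undoing the weight along each
ray, `ν_ξ(dr) = w(r ξ)⁻¹ κ_ξ(dr)`, recovers `ν`. As `ν` has no atom at `0`, `κ_ξ` lives on
`(0, ∞)` for `λ`-a.e. `ξ`; on the remaining `λ`-null set of directions `ν_ξ` is replaced by `δ₁`.
-/

open MeasureTheory Metric Set ProbabilityTheory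
open scoped ENNReal

theorem exists_kernel_pos_Ioi_ae_eq_withDensity {S : Type*} [MeasurableSpace S]
    (κ : Kernel S ℝ) [IsMarkovKernel κ] (lam : Measure S) (hκ : ∀ᵐ ξ ∂lam, κ ξ (Iic 0) = 0)
    {G : S → ℝ → ℝ≥0∞} (hG : Measurable (Function.uncurry G)) (hG0 : ∀ ξ, ∀ r > 0, G ξ r ≠ 0) :
    ∃ η : Kernel S ℝ, (∀ ξ, η ξ (Ioi 0)ᶜ = 0) ∧ (∀ ξ, 0 < η ξ (Ioi 0)) ∧
      ∀ᵐ ξ ∂lam, η ξ = (κ ξ).withDensity (G ξ) := by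
  classical
  have hbad : MeasurableSet {ξ | κ ξ (Ioi 0) = 0} :=
    κ.measurable_coe measurableSet_Ioi (measurableSet_singleton 0)
  refine ⟨Kernel.piecewise hbad (Kernel.const S (Measure.dirac 1))
    ((κ.withDensity G).restrict (measurableSet_Ioi (a := 0))), fun ξ => ?_, fun ξ => ?_, ?_⟩
  · rw [Kernel.piecewise_apply]
    split_ifs
    · simp
    · rw [Kernel.restrict_apply, Measure.restrict_apply measurableSet_Ioi.compl, compl_inter_self,
        measure_empty]
  · rw [Kernel.piecewise_apply]
    split_ifs with h
    · simp
    · have hG_Ioi : {r | G ξ r ≠ 0} ∩ Ioi 0 = Ioi 0 :=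
        inter_eq_right.mpr fun r hr => hG0 ξ r hr
      rw [Kernel.restrict_apply, Measure.restrict_apply measurableSet_Ioi, inter_self,
        Kernel.withDensity_apply _ hG, pos_iff_ne_zero, Ne,
        withDensity_apply_eq_zero' hG.of_uncurry_left.aemeasurable, hG_Ioi]
      exact h
  · filter_upwards [hκ] with ξ hξ
    have hpos : κ ξ (Ioi 0) ≠ 0 := by
      rw [(prob_compl_eq_zero_iff measurableSet_Ioi).mp (by rwa [compl_Ioi])]
      exact one_ne_zero
    rw [Kernel.piecewise_apply, if_neg (show ξ ∉ {ξ | κ ξ (Ioi 0) = 0} from hpos),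
      Kernel.restrict_apply, Kernel.withDensity_apply _ hG, restrict_withDensity measurableSet_Ioi,
      Measure.restrict_eq_self_of_ae_mem]
    rwa [ae_iff, ← compl_def, compl_Ioi]

section Polar

variable {E : Type*} [NormedAddCommGroup E] [NormedSpace ℝ E]

open scoped Classical in
/-- The direction `x / ‖x‖` of `x`, with the junk value `ξ₀` at `x = 0`. -/
noncomputable def sphereProj (ξ₀ : sphere (0 : E) 1) (x : E) : sphere (0 : E) 1 :=
  ⟨if x = 0 then ξ₀ else ‖x‖⁻¹ • x, by
    split_ifs with hx
    · exact ξ₀.2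
    · rw [mem_sphere_zero_iff_norm, norm_smul, norm_inv, norm_norm,
        inv_mul_cancel₀ (norm_ne_zero_iff.mpr hx)]⟩

theorem norm_smul_sphereProj (ξ₀ : sphere (0 : E) 1) (x : E) :
    ‖x‖ • (sphereProj ξ₀ x : E) = x := by
  by_cases hx : x = 0
  · simp [hx]
  · simp [sphereProj, hx, smul_smul]

noncomputable def polarMap (ξ₀ : sphere (0 : E) 1) (x : E) : sphere (0 : E) 1 × ℝ :=
  (sphereProj ξ₀ x, ‖x‖)

variable [MeasurableSpace E] [BorelSpace E] [SecondCountableTopology E]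

theorem measurable_sphereProj (ξ₀ : sphere (0 : E) 1) : Measurable (sphereProj ξ₀) := by
  unfold sphereProj
  exact (Measurable.ite (measurableSet_singleton 0) measurable_const
    (measurable_norm.inv.smul measurable_id)).subtype_mk

theorem measurable_polarMap (ξ₀ : sphere (0 : E) 1) : Measurable (polarMap ξ₀) :=
  (measurable_sphereProj ξ₀).prodMk measurable_norm

theorem lintegral_eq_lintegral_condKernel_polarMap (ξ₀ : sphere (0 : E) 1) (μ : Measure E)
    [IsFiniteMeasure μ] {F : E → ℝ≥0∞} (hF : Measurable F) :
    ∫⁻ x, F x ∂μ = ∫⁻ ξ, ∫⁻ r, F (r • (ξ : E)) ∂((μ.map (polarMap ξ₀)).condKernel ξ)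
      ∂(μ.map (polarMap ξ₀)).fst := by
  set ρ := μ.map (polarMap ξ₀)
  have hF' : Measurable fun p : sphere (0 : E) 1 × ℝ => F (p.2 • (p.1 : E)) :=
    hF.comp (continuous_snd.smul (continuous_subtype_val.comp continuous_fst)).measurable
  calc ∫⁻ x, F x ∂μ = ∫⁻ x, F ((polarMap ξ₀ x).2 • ((polarMap ξ₀ x).1 : E)) ∂μ := by
        simp only [polarMap, norm_smul_sphereProj]
    _ = ∫⁻ p, F (p.2 • (p.1 : E)) ∂ρ := (lintegral_map hF' (measurable_polarMap ξ₀)).symm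
    _ = ∫⁻ p, F (p.2 • (p.1 : E)) ∂(ρ.fst ⊗ₘ ρ.condKernel) := by rw [ρ.disintegrate]
    _ = _ := Measure.lintegral_compProd hF'

theorem ae_condKernel_polarMap_Iic_eq_zero (ξ₀ : sphere (0 : E) 1) (μ : Measure E)
    [IsFiniteMeasure μ] (hμ0 : μ {0} = 0) :
    ∀ᵐ ξ ∂(μ.map (polarMap ξ₀)).fst, (μ.map (polarMap ξ₀)).condKernel ξ (Iic 0) = 0 := by
  set ρ := μ.map (polarMap ξ₀)
  have hpre : polarMap ξ₀ ⁻¹' (univ ×ˢ Iic 0) = {0} := by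
    ext x
    simp [polarMap]
  have hint : ∫⁻ ξ, ρ.condKernel ξ (Iic 0) ∂ρ.fst = 0 := by
    rw [← setLIntegral_univ, ← Measure.compProd_apply_prod MeasurableSet.univ measurableSet_Iic,
      ρ.disintegrate, Measure.map_apply (measurable_polarMap ξ₀)
        (MeasurableSet.univ.prod measurableSet_Iic), hpre, hμ0]
  exact (lintegral_eq_zero_iff (ρ.condKernel.measurable_coe measurableSet_Iic)).mp hint

theorem exists_polar_decomposition [Nontrivial E] (ν : Measure E) (hν0 : ν {0} = 0) (hν : ν ≠ 0)
    {w : E → ℝ≥0∞} (hw : Measurable w) (hw0 : ∀ x ≠ 0, w x ≠ 0) (hw_top : ∀ x ≠ 0, w x ≠ ⊤)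
    (hwν : ∫⁻ x, w x ∂ν ≠ ⊤) :
    ∃ (lam : Measure (sphere (0 : E) 1)) (η : Kernel (sphere (0 : E) 1) ℝ),
      0 < lam univ ∧ (∀ ξ, η ξ (Ioi 0)ᶜ = 0) ∧ (∀ ξ, 0 < η ξ (Ioi 0)) ∧
      ∀ F : E → ℝ≥0∞, Measurable F →
        ∫⁻ x, F x ∂ν = ∫⁻ ξ, ∫⁻ r, F (r • (ξ : E)) ∂η ξ ∂lam := by
  obtain ⟨ξ₀⟩ : Nonempty (sphere (0 : E) 1) :=
    (NormedSpace.sphere_nonempty.mpr zero_le_one).to_subtype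
  set μ := ν.withDensity w
  have : IsFiniteMeasure μ := ⟨by
    rw [withDensity_apply _ MeasurableSet.univ, setLIntegral_univ]
    exact hwν.lt_top⟩
  set ρ := μ.map (polarMap ξ₀)
  have hG : Measurable
      (Function.uncurry fun (ξ : sphere (0 : E) 1) (r : ℝ) => (w (r • (ξ : E)))⁻¹) :=
    (hw.comp (measurable_snd.smul (measurable_subtype_coe.comp measurable_fst))).inv
  have hG0 (ξ : sphere (0 : E) 1) (r : ℝ) (hr : 0 < r) : (w (r • (ξ : E)))⁻¹ ≠ 0 :=
    ENNReal.inv_ne_zero.mpr (hw_top _ (smul_ne_zero hr.ne' (ne_zero_of_mem_unit_sphere ξ)))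
  obtain ⟨η, hη_Ioi, hη_pos, hη_ae⟩ := exists_kernel_pos_Ioi_ae_eq_withDensity ρ.condKernel ρ.fst
    (ae_condKernel_polarMap_Iic_eq_zero ξ₀ μ (withDensity_absolutelyContinuous _ _ hν0)) hG hG0
  refine ⟨ρ.fst, η, ?_, hη_Ioi, hη_pos, fun F hF => ?_⟩
  · have hμ : μ univ ≠ 0 := by
      rw [Ne, withDensity_apply_eq_zero' hw.aemeasurable]
      refine fun h => hν (Measure.measure_univ_eq_zero.mp ?_)
      rw [← measure_add_measure_compl (measurableSet_singleton 0), hν0, zero_add]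
      exact measure_mono_null (t := {x | w x ≠ 0} ∩ univ) (fun x hx => ⟨hw0 x hx, mem_univ x⟩) h
    rwa [Measure.fst_univ, Measure.map_apply (measurable_polarMap _) MeasurableSet.univ,
      preimage_univ, pos_iff_ne_zero]
  have hν_ne : ∀ᵐ x ∂ν, x ≠ 0 := compl_mem_ae_iff.mpr hν0
  calc ∫⁻ x, F x ∂ν = ∫⁻ x, w x * (F x * (w x)⁻¹) ∂ν := by
        refine lintegral_congr_ae (hν_ne.mono fun x hx => ?_)
        dsimp only
        rw [mul_left_comm, ENNReal.mul_inv_cancel (hw0 x hx) (hw_top x hx), mul_one]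
    _ = ∫⁻ x, F x * (w x)⁻¹ ∂μ := (lintegral_withDensity_eq_lintegral_mul _ hw (hF.mul hw.inv)).symm
    _ = ∫⁻ ξ, ∫⁻ r, F (r • (ξ : E)) * (w (r • (ξ : E)))⁻¹ ∂ρ.condKernel ξ ∂ρ.fst :=
        lintegral_eq_lintegral_condKernel_polarMap ξ₀ μ (hF.mul hw.inv)
    _ = _ := by
        refine lintegral_congr_ae (hη_ae.mono fun ξ hξ => ?_)
        dsimp only
        rw [hξ, lintegral_withDensity_eq_lintegral_mul _ hG.of_uncurry_left
          (show Measurable fun r : ℝ => F (r • (ξ : E)) from hF.comp (measurable_id.smul_const _))]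
        simp only [Pi.mul_apply, mul_comm]

end Polar

theorem stmt_0_general (d : ℕ)
    (ν : Measure (EuclideanSpace ℝ (Fin d)))
    (hν0 : ν {0} = 0)
    (hνfin : ∫⁻ x, ENNReal.ofReal (min (‖x‖ ^ 2) 1) ∂ν < ⊤)
    (hνne : ν ≠ 0) :
    ∃ (lam : Measure (Metric.sphere (0 : EuclideanSpace ℝ (Fin d)) 1))
      (νxi : Metric.sphere (0 : EuclideanSpace ℝ (Fin d)) 1 → Measure ℝ),
      0 < lam Set.univ ∧
      (∀ ξ, νxi ξ (Set.Ioi (0 : ℝ))ᶜ = 0) ∧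
      (∀ B : Set ℝ, MeasurableSet B → Measurable fun ξ => νxi ξ B) ∧
      (∀ ξ, 0 < νxi ξ (Set.Ioi (0 : ℝ))) ∧
      (∀ B : Set (EuclideanSpace ℝ (Fin d)), MeasurableSet B → B ⊆ {0}ᶜ →
        ν B = ∫⁻ ξ, ∫⁻ r in Set.Ioi (0 : ℝ),
          B.indicator (fun _ => (1 : ℝ≥0∞)) (r • (ξ : EuclideanSpace ℝ (Fin d)))
            ∂(νxi ξ) ∂lam) := by
  have : Nontrivial (EuclideanSpace ℝ (Fin d)) := by
    refine not_subsingleton_iff_nontrivial.mp fun _ => hνne ?_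
    rw [← Measure.measure_univ_eq_zero, ← hν0, Set.subsingleton_of_subsingleton.eq_singleton_of_mem
      (mem_univ 0)]
  obtain ⟨lam, η, hlam, hη_Ioi, hη_pos, hν⟩ := exists_polar_decomposition ν hν0 hνne
    (w := fun x => ENNReal.ofReal (min (‖x‖ ^ 2) 1)) (by fun_prop)
    (fun x hx => by simpa using norm_pos_iff.mpr hx) (fun _ _ => ENNReal.ofReal_ne_top) hνfin.ne
  refine ⟨lam, η, hlam, hη_Ioi, fun B hB => η.measurable_coe hB, hη_pos, fun B hB _ => ?_⟩
  rw [← lintegral_indicator_one hB, hν (B.indicator 1) (measurable_one.indicator hB)]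
  refine lintegral_congr fun ξ => ?_
  rw [Measure.restrict_eq_self_of_ae_mem (show ∀ᵐ r ∂η ξ, r ∈ Ioi (0 : ℝ) from hη_Ioi ξ)]
  rfl

/-- Polar decomposition of Lévy measures: every nonzero Lévy measure `ν` on `ℝ^d`
admits a decomposition `ν(B) = ∫_S ∫₀^∞ 1_B(rξ) ν_ξ(dr) λ(dξ)`. -/
theorem stmt_0 (d : ℕ) (hd : 1 ≤ d)
    (ν : Measure (EuclideanSpace ℝ (Fin d)))
    (hν0 : ν {0} = 0)
    (hνfin : ∫⁻ x, ENNReal.ofReal (min (‖x‖ ^ 2) 1) ∂ν < ⊤)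
    (hνne : ν ≠ 0) :
    ∃ (lam : Measure (Metric.sphere (0 : EuclideanSpace ℝ (Fin d)) 1))
      (νxi : Metric.sphere (0 : EuclideanSpace ℝ (Fin d)) 1 → Measure ℝ),
      0 < lam Set.univ ∧
      (∀ ξ, νxi ξ (Set.Ioi (0 : ℝ))ᶜ = 0) ∧
      (∀ B : Set ℝ, MeasurableSet B → Measurable fun ξ => νxi ξ B) ∧
      (∀ ξ, 0 < νxi ξ (Set.Ioi (0 : ℝ))) ∧
      (∀ B : Set (EuclideanSpace ℝ (Fin d)), MeasurableSet B → B ⊆ {0}ᶜ →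
        ν B = ∫⁻ ξ, ∫⁻ r in Set.Ioi (0 : ℝ),
          B.indicator (fun _ => (1 : ℝ≥0∞)) (r • (ξ : EuclideanSpace ℝ (Fin d)))
            ∂(νxi ξ) ∂lam) :=
  stmt_0_general d ν hν0 hνfin hνne
end

section
/- Let ν be a nonzero Lévy measure on ℝ^d and let (λ¹(dξ), ν¹_ξ(dr)) and (λ²(dξ), ν²_ξ(dr)) be two polar decompositions of ν. Then λ¹ and λ² are mutually absolutely continuous and there exists a measurable function c : S → (0,∞) such that λ²(dξ) = c(ξ) λ¹(dξ) and, for λ¹-almost every ξ ∈ S, ν²_ξ = c(ξ)^{-1} ν¹_ξ. -/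
/-!
Both decompositions disintegrate `ν` along `x ↦ (x / ‖x‖, ‖x‖)`, so for every measurable
`B ⊆ (0, ∞)` the measures `ν¹_ξ(B) λ¹(dξ)` and `ν²_ξ(B) λ²(dξ)` on the sphere coincide.
Summing them over the rays `B = (q, ∞)`, `q ∈ ℚ₊`, with weights that keep the total mass finite
(possible because `ν {‖x‖ > q} < ∞`) gives everywhere positive densities with `f₁ λ¹ = f₂ λ²`,
whence `λ² = (f₁ / f₂) λ¹`. Comparing the densities ray by ray then yields
`ν¹_ξ (q, ∞) = c(ξ) ν²_ξ (q, ∞)` for all rational `q > 0` and `λ¹`-a.e. `ξ`, and these rays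
determine a measure on `(0, ∞)` that is finite on each of them.
-/

open MeasureTheory Set Filter
open scoped ENNReal

namespace PolarDecomposition

section WithDensity

variable {α : Type*} [MeasurableSpace α] {μ ν : Measure α}

lemma withDensity_tsum_const_mul {ι : Type*} [Countable ι] {g : ι → α → ℝ≥0∞}
    (hg : ∀ i, Measurable (g i)) (c : ι → ℝ≥0∞) :
    μ.withDensity (fun x => ∑' i, c i * g i x) =
      Measure.sum fun i => c i • μ.withDensity (g i) := by
  ext s hs
  simp only [withDensity_apply _ hs, Measure.sum_apply _ hs, Measure.smul_apply, smul_eq_mul]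
  rw [lintegral_tsum fun i => ((hg i).const_mul _).aemeasurable]
  simp only [lintegral_const_mul _ (hg _)]

lemma eq_withDensity_div_of_withDensity_eq {f g : α → ℝ≥0∞} (hf : Measurable f)
    (hg : Measurable g) (hg0 : ∀ᵐ x ∂ν, g x ≠ 0) (hgtop : ∀ᵐ x ∂ν, g x ≠ ∞)
    (h : μ.withDensity f = ν.withDensity g) : ν = μ.withDensity fun x => f x / g x :=
  calc ν = (ν.withDensity g).withDensity fun x => (g x)⁻¹ :=
        (withDensity_inv_same hg hg0 hgtop).symm
    _ = μ.withDensity fun x => f x / g x := by rw [← h]; exact (withDensity_mul _ hf hg.inv).symm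

lemma exists_measurable_pos_ofReal_ae_eq {g : α → ℝ≥0∞} (hg : Measurable g)
    (hg0 : ∀ᵐ x ∂μ, g x ≠ 0) (hgtop : ∀ᵐ x ∂μ, g x ≠ ∞) :
    ∃ c : α → ℝ, Measurable c ∧ (∀ x, 0 < c x) ∧
      (fun x => ENNReal.ofReal (c x)) =ᵐ[μ] g := by
  classical
  refine ⟨fun x => if g x ∈ Ioo 0 ∞ then (g x).toReal else 1,
    Measurable.ite (hg measurableSet_Ioo) hg.ennreal_toReal measurable_const, fun x => ?_, ?_⟩
  · dsimp only
    split_ifs with hx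
    · exact ENNReal.toReal_pos hx.1.ne' hx.2.ne
    · exact one_pos
  · filter_upwards [hg0, hgtop] with x hx0 hxtop
    rw [if_pos ⟨pos_iff_ne_zero.2 hx0, lt_top_iff_ne_top.2 hxtop⟩, ENNReal.ofReal_toReal hxtop]

lemma exists_density_of_withDensity_eq {f g : α → ℝ≥0∞} (hf : Measurable f)
    (hg : Measurable g) (hf0 : ∀ x, f x ≠ 0) (hg0 : ∀ x, g x ≠ 0)
    (hfint : ∫⁻ x, f x ∂μ ≠ ∞) (h : μ.withDensity f = ν.withDensity g) :
    μ ≪ ν ∧ ν ≪ μ ∧ ∃ c : α → ℝ, Measurable c ∧ (∀ x, 0 < c x) ∧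
      ν = μ.withDensity fun x => ENNReal.ofReal (c x) := by
  have hgint : ∫⁻ x, g x ∂ν ≠ ∞ := by
    rwa [← setLIntegral_univ, ← withDensity_apply _ .univ, ← h, withDensity_apply _ .univ,
      setLIntegral_univ]
  have hftop : ∀ᵐ x ∂μ, f x ≠ ∞ := (ae_lt_top hf hfint).mono fun _ => ne_of_lt
  have hgtop : ∀ᵐ x ∂ν, g x ≠ ∞ := (ae_lt_top hg hgint).mono fun _ => ne_of_lt
  have hν : ν = μ.withDensity fun x => f x / g x :=
    eq_withDensity_div_of_withDensity_eq hf hg (.of_forall hg0) hgtop h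
  have hμ : μ = ν.withDensity fun x => g x / f x :=
    eq_withDensity_div_of_withDensity_eq hg hf (.of_forall hf0) hftop h.symm
  have hμν : μ ≪ ν := hμ ▸ withDensity_absolutelyContinuous _ _
  obtain ⟨c, hc, hcpos, hcf⟩ := exists_measurable_pos_ofReal_ae_eq (μ := μ) (hf.div hg)
    ((hgtop.filter_mono hμν.ae_le).mono fun x hx => by simp [ENNReal.div_eq_zero_iff, hf0 x, hx])
    (hftop.mono fun x hx => by simp [ENNReal.div_eq_top, hg0 x, hx])
  exact ⟨hμν, hν ▸ withDensity_absolutelyContinuous _ _, c, hc, hcpos,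
    hν.trans (withDensity_congr_ae hcf).symm⟩

end WithDensity

lemma Ioi_zero_eq_iUnion_Ioi_rat : Ioi (0 : ℝ) = ⋃ q : {q : ℚ // 0 < q}, Ioi (q : ℝ) := by
  ext x
  simp only [mem_Ioi, mem_iUnion, Subtype.exists, exists_prop]
  refine ⟨fun hx => ?_, fun ⟨q, hq, hqx⟩ => lt_trans (by exact_mod_cast hq) hqx⟩
  obtain ⟨q, hq0, hqx⟩ := exists_rat_btwn hx
  exact ⟨q, by exact_mod_cast hq0, hqx⟩

lemma tsum_mul_measure_Ioi_rat_ne_zero {μ : Measure ℝ} (hμ : μ (Ioi 0) ≠ 0)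
    {δ : {q : ℚ // 0 < q} → ℝ≥0∞} (hδ : ∀ q, δ q ≠ 0) : ∑' q, δ q * μ (Ioi (q : ℝ)) ≠ 0 := by
  rw [Ne, ENNReal.tsum_eq_zero]
  intro h
  refine hμ (Ioi_zero_eq_iUnion_Ioi_rat ▸ measure_iUnion_null fun q => ?_)
  exact (mul_eq_zero.1 (h q)).resolve_left (hδ q)

lemma Measure.eq_of_measure_Ioi_rat_eq {μ μ' : Measure ℝ} (hμ : μ (Ioi 0)ᶜ = 0)
    (hμ' : μ' (Ioi 0)ᶜ = 0) (hfin : ∀ q : ℚ, 0 < q → μ (Ioi q) ≠ ∞)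
    (hIoi : ∀ q : ℚ, 0 < q → μ (Ioi q) = μ' (Ioi q)) : μ = μ' := by
  have hrestrict (q : {q : ℚ // 0 < q}) : μ.restrict (Ioi q) = μ'.restrict (Ioi q) := by
    have := isFiniteMeasure_restrict.2 (hfin q q.2)
    refine ext_of_generate_finite _
      (BorelSpace.measurable_eq.trans Real.borel_eq_generateFrom_Ioi_rat)
      Real.isPiSystem_Ioi_rat ?_ ?_
    · simp only [mem_iUnion, mem_singleton_iff]
      rintro _ ⟨a, rfl⟩
      rw [Measure.restrict_apply measurableSet_Ioi, Measure.restrict_apply measurableSet_Ioi,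
        Ioi_inter_Ioi, ← Rat.cast_max]
      exact hIoi _ (lt_max_of_lt_right q.2)
    · simpa using hIoi q q.2
  rw [← Measure.restrict_eq_self_of_ae_mem (μ := μ) (ae_iff.2 hμ),
    ← Measure.restrict_eq_self_of_ae_mem (μ := μ') (ae_iff.2 hμ'), Ioi_zero_eq_iUnion_Ioi_rat]
  exact Measure.restrict_iUnion_congr.2 hrestrict

section Kernel

variable {S : Type*} [MeasurableSpace S] {lam1 lam2 : Measure S} {ν1 ν2 : S → Measure ℝ}

lemma exists_pos_withDensity_eq_of_withDensity_Ioi_eq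
    (h1meas : ∀ B : Set ℝ, MeasurableSet B → Measurable fun ξ => ν1 ξ B)
    (h2meas : ∀ B : Set ℝ, MeasurableSet B → Measurable fun ξ => ν2 ξ B)
    (h1ne : ∀ ξ, 0 < ν1 ξ (Ioi 0)) (h2ne : ∀ ξ, 0 < ν2 ξ (Ioi 0))
    (hrays : ∀ q : ℚ, 0 < q →
      lam1.withDensity (fun ξ => ν1 ξ (Ioi q)) = lam2.withDensity (fun ξ => ν2 ξ (Ioi q)))
    (hfin : ∀ q : ℚ, 0 < q → ∫⁻ ξ, ν1 ξ (Ioi q) ∂lam1 ≠ ∞) :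
    ∃ f1 f2 : S → ℝ≥0∞, Measurable f1 ∧ Measurable f2 ∧ (∀ ξ, f1 ξ ≠ 0) ∧ (∀ ξ, f2 ξ ≠ 0) ∧
      ∫⁻ ξ, f1 ξ ∂lam1 ≠ ∞ ∧ lam1.withDensity f1 = lam2.withDensity f2 := by
  obtain ⟨δ, hδpos, hδsum⟩ := ENNReal.exists_pos_tsum_mul_lt_of_countable one_ne_zero
    (fun q : {q : ℚ // 0 < q} => ∫⁻ ξ, ν1 ξ (Ioi q) ∂lam1) fun q => hfin q q.2
  have hδ (q : {q : ℚ // 0 < q}) : (δ q : ℝ≥0∞) ≠ 0 := by exact_mod_cast (hδpos q).ne'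
  have hray1 (q : {q : ℚ // 0 < q}) := h1meas _ (measurableSet_Ioi (a := (q : ℝ)))
  have hray2 (q : {q : ℚ // 0 < q}) := h2meas _ (measurableSet_Ioi (a := (q : ℝ)))
  refine ⟨fun ξ => ∑' q, δ q * ν1 ξ (Ioi (q : ℝ)), fun ξ => ∑' q, δ q * ν2 ξ (Ioi (q : ℝ)),
    .tsum fun q => (hray1 q).const_mul _, .tsum fun q => (hray2 q).const_mul _,
    fun ξ => tsum_mul_measure_Ioi_rat_ne_zero (h1ne ξ).ne' hδ,
    fun ξ => tsum_mul_measure_Ioi_rat_ne_zero (h2ne ξ).ne' hδ, ?_, ?_⟩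
  · rw [lintegral_tsum fun q => ((hray1 q).const_mul _).aemeasurable]
    simp_rw [lintegral_const_mul _ (hray1 _), mul_comm (δ _ : ℝ≥0∞)]
    exact (hδsum.trans ENNReal.one_lt_top).ne
  · rw [withDensity_tsum_const_mul hray1, withDensity_tsum_const_mul hray2]
    simp_rw [hrays _ (Subtype.prop _)]

lemma ae_eq_inv_smul_of_withDensity_Ioi_eq {c : S → ℝ} (hc : Measurable c) (hcpos : ∀ ξ, 0 < c ξ)
    (hlam : lam2 = lam1.withDensity fun ξ => ENNReal.ofReal (c ξ))
    (h1supp : ∀ ξ, ν1 ξ (Ioi 0)ᶜ = 0) (h2supp : ∀ ξ, ν2 ξ (Ioi 0)ᶜ = 0)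
    (h1meas : ∀ B : Set ℝ, MeasurableSet B → Measurable fun ξ => ν1 ξ B)
    (h2meas : ∀ B : Set ℝ, MeasurableSet B → Measurable fun ξ => ν2 ξ B)
    (hrays : ∀ q : ℚ, 0 < q →
      lam1.withDensity (fun ξ => ν1 ξ (Ioi q)) = lam2.withDensity (fun ξ => ν2 ξ (Ioi q)))
    (hfin : ∀ q : ℚ, 0 < q → ∫⁻ ξ, ν1 ξ (Ioi q) ∂lam1 ≠ ∞) :
    ∀ᵐ ξ ∂lam1, ν2 ξ = (ENNReal.ofReal (c ξ))⁻¹ • ν1 ξ := by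
  have hray (q : ℚ) (hq : 0 < q) :
      ∀ᵐ ξ ∂lam1, ν1 ξ (Ioi q) = ENNReal.ofReal (c ξ) * ν2 ξ (Ioi q) := by
    have h := hrays q hq
    rw [hlam, ← withDensity_mul _ hc.ennreal_ofReal (h2meas _ measurableSet_Ioi)] at h
    exact (withDensity_eq_iff (h1meas _ measurableSet_Ioi).aemeasurable
      (hc.ennreal_ofReal.mul (h2meas _ measurableSet_Ioi)).aemeasurable (hfin q hq)).1 h
  have hrayfin (q : ℚ) (hq : 0 < q) : ∀ᵐ ξ ∂lam1, ν1 ξ (Ioi q) ≠ ∞ :=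
    (ae_lt_top (h1meas _ measurableSet_Ioi) (hfin q hq)).mono fun _ => ne_of_lt
  filter_upwards [ae_all_iff.2 fun q => eventually_imp_distrib_left.2 (hray q),
    ae_all_iff.2 fun q => eventually_imp_distrib_left.2 (hrayfin q)] with ξ hξ hξfin
  have hc0 : ENNReal.ofReal (c ξ) ≠ 0 := (ENNReal.ofReal_pos.2 (hcpos ξ)).ne'
  have hξeq : ν1 ξ = ENNReal.ofReal (c ξ) • ν2 ξ := Measure.eq_of_measure_Ioi_rat_eq (h1supp ξ)
    (by rw [Measure.smul_apply, h2supp ξ, smul_zero]) hξfin hξ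
  rw [hξeq, smul_smul, ENNReal.inv_mul_cancel hc0 ENNReal.ofReal_ne_top, one_smul]

end Kernel

lemma measure_norm_gt_ne_top {E : Type*} [NormedAddCommGroup E] [MeasurableSpace E]
    [BorelSpace E] {ν : Measure E}
    (hν : ∫⁻ x, ENNReal.ofReal (min (‖x‖ ^ 2) 1) ∂ν < ⊤) {ε : ℝ} (hε : 0 < ε) :
    ν {x | ε < ‖x‖} ≠ ∞ := by
  have hε' : ENNReal.ofReal (min (ε ^ 2) 1) ≠ 0 := by simp [hε.ne']
  refine ne_top_of_le_ne_top (ENNReal.div_ne_top hν.ne hε') <| (measure_mono fun x hx => ?_).trans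
    (meas_ge_le_lintegral_div (by fun_prop) hε' ENNReal.ofReal_ne_top)
  exact ENNReal.ofReal_le_ofReal (min_le_min_right _ (pow_le_pow_left₀ hε.le (le_of_lt hx) 2))

section Polar

variable {E : Type*} [NormedAddCommGroup E] [NormedSpace ℝ E]

def polarSet (A : Set (Metric.sphere (0 : E) 1)) (B : Set ℝ) : Set E :=
  {x | ‖x‖ ∈ B ∧ ‖x‖⁻¹ • x ∈ Subtype.val '' A}

lemma smul_mem_polarSet_iff {A : Set (Metric.sphere (0 : E) 1)} {B : Set ℝ}
    (ξ : Metric.sphere (0 : E) 1) {r : ℝ} (hr : 0 < r) :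
    r • (ξ : E) ∈ polarSet A B ↔ ξ ∈ A ∧ r ∈ B := by
  have hnorm : ‖r • (ξ : E)‖ = r := by
    rw [norm_smul, norm_eq_of_mem_sphere ξ, mul_one, Real.norm_of_nonneg hr.le]
  rw [polarSet, mem_ofPred_eq, hnorm, smul_smul, inv_mul_cancel₀ hr.ne', one_smul,
    Subtype.val_injective.mem_set_image, and_comm]

lemma polarSet_subset_compl_zero (A : Set (Metric.sphere (0 : E) 1)) {B : Set ℝ}
    (hB : B ⊆ Ioi 0) : polarSet A B ⊆ {0}ᶜ := by
  rintro x ⟨hx, -⟩ rfl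
  simpa using hB hx

variable [MeasurableSpace E] [BorelSpace E]

lemma measurableSet_polarSet {A : Set (Metric.sphere (0 : E) 1)} {B : Set ℝ}
    (hA : MeasurableSet A) (hB : MeasurableSet B) : MeasurableSet (polarSet A B) :=
  (measurable_norm hB).inter <| (measurable_norm.inv.smul measurable_id)
    (Metric.isClosed_sphere.measurableSet.subtype_image hA)

lemma measure_polarSet {ν : Measure E} {lam : Measure (Metric.sphere (0 : E) 1)}
    {νk : Metric.sphere (0 : E) 1 → Measure ℝ}
    (hdec : ∀ B : Set E, MeasurableSet B → B ⊆ {0}ᶜ →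
      ν B = ∫⁻ ξ, ∫⁻ r in Ioi (0 : ℝ), B.indicator (fun _ => (1 : ℝ≥0∞)) (r • (ξ : E))
        ∂(νk ξ) ∂lam)
    {A : Set (Metric.sphere (0 : E) 1)} {B : Set ℝ} (hA : MeasurableSet A)
    (hB : MeasurableSet B) (hB0 : B ⊆ Ioi 0) :
    ν (polarSet A B) = ∫⁻ ξ in A, νk ξ B ∂lam := by
  rw [hdec _ (measurableSet_polarSet hA hB) (polarSet_subset_compl_zero A hB0),
    ← lintegral_indicator hA]
  refine lintegral_congr fun ξ => ?_
  have hind : ∀ r ∈ Ioi (0 : ℝ), (polarSet A B).indicator (fun _ => (1 : ℝ≥0∞)) (r • (ξ : E)) =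
      A.indicator (fun _ => B.indicator 1 r) ξ := fun r hr => by
    by_cases hξ : ξ ∈ A <;> by_cases hrB : r ∈ B <;> simp [indicator, smul_mem_polarSet_iff ξ hr, *]
  rw [setLIntegral_congr_fun measurableSet_Ioi hind]
  by_cases hξ : ξ ∈ A
  · simp only [indicator_of_mem hξ]
    rw [lintegral_indicator_one hB, Measure.restrict_apply hB, inter_eq_self_of_subset_left hB0]
  · simp [indicator_of_notMem hξ]

lemma withDensity_eq_of_polar {ν : Measure E} {lam1 lam2 : Measure (Metric.sphere (0 : E) 1)}
    {ν1 ν2 : Metric.sphere (0 : E) 1 → Measure ℝ}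
    (h1dec : ∀ B : Set E, MeasurableSet B → B ⊆ {0}ᶜ →
      ν B = ∫⁻ ξ, ∫⁻ r in Ioi (0 : ℝ), B.indicator (fun _ => (1 : ℝ≥0∞)) (r • (ξ : E))
        ∂(ν1 ξ) ∂lam1)
    (h2dec : ∀ B : Set E, MeasurableSet B → B ⊆ {0}ᶜ →
      ν B = ∫⁻ ξ, ∫⁻ r in Ioi (0 : ℝ), B.indicator (fun _ => (1 : ℝ≥0∞)) (r • (ξ : E))
        ∂(ν2 ξ) ∂lam2)
    {B : Set ℝ} (hB : MeasurableSet B) (hB0 : B ⊆ Ioi 0) :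
    lam1.withDensity (fun ξ => ν1 ξ B) = lam2.withDensity (fun ξ => ν2 ξ B) :=
  Measure.ext fun A hA => by
    rw [withDensity_apply _ hA, withDensity_apply _ hA, ← measure_polarSet h1dec hA hB hB0,
      measure_polarSet h2dec hA hB hB0]

end Polar

end PolarDecomposition

open PolarDecomposition

theorem stmt_1_general (d : ℕ)
    (ν : Measure (EuclideanSpace ℝ (Fin d)))
    (hνfin : ∫⁻ x, ENNReal.ofReal (min (‖x‖ ^ 2) 1) ∂ν < ⊤)
    (lam1 lam2 : Measure (Metric.sphere (0 : EuclideanSpace ℝ (Fin d)) 1))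
    (ν1 ν2 : Metric.sphere (0 : EuclideanSpace ℝ (Fin d)) 1 → Measure ℝ)
    (h1supp : ∀ ξ, ν1 ξ (Set.Ioi (0 : ℝ))ᶜ = 0)
    (h2supp : ∀ ξ, ν2 ξ (Set.Ioi (0 : ℝ))ᶜ = 0)
    (h1meas : ∀ B : Set ℝ, MeasurableSet B → Measurable fun ξ => ν1 ξ B)
    (h2meas : ∀ B : Set ℝ, MeasurableSet B → Measurable fun ξ => ν2 ξ B)
    (h1ne : ∀ ξ, 0 < ν1 ξ (Set.Ioi (0 : ℝ)))
    (h2ne : ∀ ξ, 0 < ν2 ξ (Set.Ioi (0 : ℝ)))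
    (h1dec : ∀ B : Set (EuclideanSpace ℝ (Fin d)), MeasurableSet B → B ⊆ {0}ᶜ →
      ν B = ∫⁻ ξ, ∫⁻ r in Set.Ioi (0 : ℝ),
        B.indicator (fun _ => (1 : ℝ≥0∞)) (r • (ξ : EuclideanSpace ℝ (Fin d)))
          ∂(ν1 ξ) ∂lam1)
    (h2dec : ∀ B : Set (EuclideanSpace ℝ (Fin d)), MeasurableSet B → B ⊆ {0}ᶜ →
      ν B = ∫⁻ ξ, ∫⁻ r in Set.Ioi (0 : ℝ),
        B.indicator (fun _ => (1 : ℝ≥0∞)) (r • (ξ : EuclideanSpace ℝ (Fin d)))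
          ∂(ν2 ξ) ∂lam2) :
    lam1 ≪ lam2 ∧ lam2 ≪ lam1 ∧
    ∃ c : Metric.sphere (0 : EuclideanSpace ℝ (Fin d)) 1 → ℝ,
      Measurable c ∧ (∀ ξ, 0 < c ξ) ∧
      lam2 = lam1.withDensity (fun ξ => ENNReal.ofReal (c ξ)) ∧
      (∀ᵐ ξ ∂lam1, ν2 ξ = (ENNReal.ofReal (c ξ))⁻¹ • ν1 ξ) := by
  have hrays (q : ℚ) (hq : 0 < q) : lam1.withDensity (fun ξ => ν1 ξ (Ioi (q : ℝ))) =
      lam2.withDensity (fun ξ => ν2 ξ (Ioi (q : ℝ))) :=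
    withDensity_eq_of_polar h1dec h2dec measurableSet_Ioi (Ioi_subset_Ioi (by exact_mod_cast hq.le))
  have hfin (q : ℚ) (hq : 0 < q) : ∫⁻ ξ, ν1 ξ (Ioi (q : ℝ)) ∂lam1 ≠ ∞ := by
    rw [← setLIntegral_univ, ← measure_polarSet h1dec .univ measurableSet_Ioi
      (Ioi_subset_Ioi (by exact_mod_cast hq.le))]
    exact ne_top_of_le_ne_top (measure_norm_gt_ne_top hνfin (by exact_mod_cast hq))
      (measure_mono fun x hx => hx.1)
  obtain ⟨f1, f2, hf1, hf2, hf10, hf20, hf1int, hf⟩ :=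
    exists_pos_withDensity_eq_of_withDensity_Ioi_eq h1meas h2meas h1ne h2ne hrays hfin
  obtain ⟨hac12, hac21, c, hc, hcpos, hlam⟩ :=
    exists_density_of_withDensity_eq hf1 hf2 hf10 hf20 hf1int hf
  exact ⟨hac12, hac21, c, hc, hcpos, hlam,
    ae_eq_inv_smul_of_withDensity_Ioi_eq hc hcpos hlam h1supp h2supp h1meas h2meas hrays hfin⟩

/-- Uniqueness of the polar decomposition of a nonzero Lévy measure, up to
multiplication by a measurable function `c(ξ) ∈ (0,∞)`. -/
theorem stmt_1 (d : ℕ) (hd : 1 ≤ d)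
    (ν : Measure (EuclideanSpace ℝ (Fin d)))
    (hν0 : ν {0} = 0)
    (hνfin : ∫⁻ x, ENNReal.ofReal (min (‖x‖ ^ 2) 1) ∂ν < ⊤)
    (hνne : ν ≠ 0)
    (lam1 lam2 : Measure (Metric.sphere (0 : EuclideanSpace ℝ (Fin d)) 1))
    (ν1 ν2 : Metric.sphere (0 : EuclideanSpace ℝ (Fin d)) 1 → Measure ℝ)
    (h1pos : 0 < lam1 Set.univ) (h2pos : 0 < lam2 Set.univ)
    (h1supp : ∀ ξ, ν1 ξ (Set.Ioi (0 : ℝ))ᶜ = 0)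
    (h2supp : ∀ ξ, ν2 ξ (Set.Ioi (0 : ℝ))ᶜ = 0)
    (h1meas : ∀ B : Set ℝ, MeasurableSet B → Measurable fun ξ => ν1 ξ B)
    (h2meas : ∀ B : Set ℝ, MeasurableSet B → Measurable fun ξ => ν2 ξ B)
    (h1ne : ∀ ξ, 0 < ν1 ξ (Set.Ioi (0 : ℝ)))
    (h2ne : ∀ ξ, 0 < ν2 ξ (Set.Ioi (0 : ℝ)))
    (h1dec : ∀ B : Set (EuclideanSpace ℝ (Fin d)), MeasurableSet B → B ⊆ {0}ᶜ →
      ν B = ∫⁻ ξ, ∫⁻ r in Set.Ioi (0 : ℝ),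
        B.indicator (fun _ => (1 : ℝ≥0∞)) (r • (ξ : EuclideanSpace ℝ (Fin d)))
          ∂(ν1 ξ) ∂lam1)
    (h2dec : ∀ B : Set (EuclideanSpace ℝ (Fin d)), MeasurableSet B → B ⊆ {0}ᶜ →
      ν B = ∫⁻ ξ, ∫⁻ r in Set.Ioi (0 : ℝ),
        B.indicator (fun _ => (1 : ℝ≥0∞)) (r • (ξ : EuclideanSpace ℝ (Fin d)))
          ∂(ν2 ξ) ∂lam2) :
    lam1 ≪ lam2 ∧ lam2 ≪ lam1 ∧
    ∃ c : Metric.sphere (0 : EuclideanSpace ℝ (Fin d)) 1 → ℝ,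
      Measurable c ∧ (∀ ξ, 0 < c ξ) ∧
      lam2 = lam1.withDensity (fun ξ => ENNReal.ofReal (c ξ)) ∧
      (∀ᵐ ξ ∂lam1, ν2 ξ = (ENNReal.ofReal (c ξ))⁻¹ • ν1 ξ) :=
  stmt_1_general d ν hνfin lam1 lam2 ν1 ν2 h1supp h2supp h1meas h2meas h1ne h2ne h1dec h2dec
end

section
/- For all z, x ∈ ℝ^d and u ∈ ℝ, |g(uz, x) − g(z, ux)| ≤ |z| · |x|³ (|u| + |u|³) / ((1 + |x|²)(1 + |ux|²)), where g(z,x) = e^{i⟨z,x⟩} − 1 − i⟨z,x⟩/(1 + |x|²). -/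
/-!
Since `⟪u • z, x⟫ = ⟪z, u • x⟫`, the exponential terms of the two integrands cancel and the
difference is `i u⟪z, x⟫ ((1 + |ux|²)⁻¹ - (1 + |x|²)⁻¹)`. Writing the difference of inverses over the
common denominator leaves `|x|² - |ux|² = (1 - u²)|x|²` in the numerator, and Cauchy–Schwarz together
with `|1 - u²| ≤ 1 + u²` gives the bound.
-/

open MeasureTheory

/-- The Lévy–Khintchine integrand `g(z,x) = e^{i⟨z,x⟩} − 1 − i⟨z,x⟩/(1+|x|²)`. -/
noncomputable def levyIntegrand (d : ℕ) (z x : EuclideanSpace ℝ (Fin d)) : ℂ :=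
  Complex.exp (Complex.I * ((inner ℝ z x : ℝ) : ℂ)) - 1 -
    Complex.I * ((inner ℝ z x : ℝ) : ℂ) / (1 + (‖x‖ : ℂ) ^ 2)

lemma abs_inv_one_add_sq_sub_inv_one_add_sq (a b : ℝ) :
    |(1 + b ^ 2)⁻¹ - (1 + a ^ 2)⁻¹| = |a ^ 2 - b ^ 2| / ((1 + a ^ 2) * (1 + b ^ 2)) := by
  have h_pos : (0 : ℝ) < (1 + b ^ 2) * (1 + a ^ 2) := by positivity
  rw [inv_sub_inv (by positivity) (by positivity), abs_div, abs_of_pos h_pos, mul_comm (1 + b ^ 2)]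
  congr 2
  ring

lemma levyIntegrand_sub_of_inner_eq {d : ℕ} {z x z' x' : EuclideanSpace ℝ (Fin d)}
    (h : inner ℝ z x = inner ℝ z' x') :
    levyIntegrand d z x - levyIntegrand d z' x' =
      Complex.I * ((inner ℝ z x * ((1 + ‖x'‖ ^ 2)⁻¹ - (1 + ‖x‖ ^ 2)⁻¹) : ℝ) : ℂ) := by
  simp only [levyIntegrand, ← h]
  push_cast
  ring

lemma norm_levyIntegrand_sub_of_inner_eq {d : ℕ} {z x z' x' : EuclideanSpace ℝ (Fin d)}
    (h : inner ℝ z x = inner ℝ z' x') :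
    ‖levyIntegrand d z x - levyIntegrand d z' x'‖ =
      |inner ℝ z x| * |‖x‖ ^ 2 - ‖x'‖ ^ 2| / ((1 + ‖x‖ ^ 2) * (1 + ‖x'‖ ^ 2)) := by
  rw [levyIntegrand_sub_of_inner_eq h, norm_mul, Complex.norm_I, one_mul, Complex.norm_real,
    Real.norm_eq_abs, abs_mul, abs_inv_one_add_sq_sub_inv_one_add_sq, mul_div_assoc]

lemma abs_smul_inner_mul_abs_sq_sub_sq_le {E : Type*} [NormedAddCommGroup E]
    [InnerProductSpace ℝ E] (z x : E) (u : ℝ) :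
    |inner ℝ (u • z) x| * |‖x‖ ^ 2 - ‖u • x‖ ^ 2| ≤ ‖z‖ * (‖x‖ ^ 3 * (|u| + |u| ^ 3)) := by
  have h_inner : |inner ℝ (u • z) x| ≤ |u| * (‖z‖ * ‖x‖) := by
    rw [real_inner_smul_left, abs_mul]
    gcongr
    exact abs_real_inner_le_norm z x
  have h_sq : |‖x‖ ^ 2 - ‖u • x‖ ^ 2| ≤ ‖x‖ ^ 2 * (1 + |u| ^ 2) := by
    rw [norm_smul, Real.norm_eq_abs, abs_le]
    constructor <;> nlinarith [sq_nonneg ‖x‖, sq_nonneg (|u| * ‖x‖)]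
  calc |inner ℝ (u • z) x| * |‖x‖ ^ 2 - ‖u • x‖ ^ 2|
      ≤ |u| * (‖z‖ * ‖x‖) * (‖x‖ ^ 2 * (1 + |u| ^ 2)) := by gcongr
    _ = ‖z‖ * (‖x‖ ^ 3 * (|u| + |u| ^ 3)) := by ring

theorem stmt_2_general (d : ℕ) (z x : EuclideanSpace ℝ (Fin d)) (u : ℝ) :
    ‖levyIntegrand d (u • z) x - levyIntegrand d z (u • x)‖ ≤
      ‖z‖ * (‖x‖ ^ 3 * (|u| + |u| ^ 3)) / ((1 + ‖x‖ ^ 2) * (1 + ‖u • x‖ ^ 2)) := by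
  have h_inner : inner ℝ (u • z) x = inner ℝ z (u • x) := by
    rw [real_inner_smul_left, real_inner_smul_right]
  rw [norm_levyIntegrand_sub_of_inner_eq h_inner]
  exact div_le_div_of_nonneg_right (abs_smul_inner_mul_abs_sq_sub_sq_le z x u) (by positivity)

/-- `|g(uz,x) − g(z,ux)| ≤ |z| |x|³ (|u|+|u|³) / ((1+|x|²)(1+|ux|²))`. -/
theorem stmt_2 (d : ℕ) (hd : 1 ≤ d) (z x : EuclideanSpace ℝ (Fin d)) (u : ℝ) :
    ‖levyIntegrand d (u • z) x - levyIntegrand d z (u • x)‖ ≤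
      ‖z‖ * (‖x‖ ^ 3 * (|u| + |u| ^ 3)) / ((1 + ‖x‖ ^ 2) * (1 + ‖u • x‖ ^ 2)) :=
  stmt_2_general d z x u
end

section
/- Let ν be a Lévy measure on ℝ^d, let 0 < a < ∞, and let f : (0,a) → ℝ be measurable with ∫₀^a f(s)² ds < ∞. Then ∫₀^a ∫_{ℝ^d} (|f(s)x|² ∧ 1) ν(dx) ds < ∞; in particular, the transformed measure T_f ν is again a Lévy measure on ℝ^d. -/
/-!
Since `min (‖c • x‖²) 1 ≤ (c² + 1) · min (‖x‖²) 1`, the double integral is bounded by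
`(∫₀^a f² + a) · ∫ (‖x‖² ∧ 1) dν < ∞`. For the transformed measure, the layer cake formula
writes `∫ (‖y‖² ∧ 1) d(T_f ν)` through the measures of the super-level sets
`{‖y‖² ∧ 1 > t}`, `t > 0`, which avoid the origin; on them `T_f ν` is given by its defining
formula, and Tonelli turns the result back into the double integral. Tonelli applies because
a Lévy measure is σ-finite.
-/

open MeasureTheory Set

open scoped ENNReal

theorem sigmaFinite_of_lintegral_lt_top {α : Type*} [MeasurableSpace α] {ν : Measure α}
    {g : α → ℝ≥0∞} (hg : Measurable g) (hg_ne_zero : ∀ᵐ x ∂ν, g x ≠ 0)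
    (hg_ne_top : ∀ᵐ x ∂ν, g x ≠ ∞) (hint : ∫⁻ x, g x ∂ν < ∞) : SigmaFinite ν := by
  have : IsFiniteMeasure (ν.withDensity g) := isFiniteMeasure_withDensity hint.ne
  rw [← withDensity_inv_same hg hg_ne_zero hg_ne_top]
  exact SigmaFinite.withDensity_of_ne_top <| (withDensity_absolutelyContinuous ν g).ae_le <|
    hg_ne_zero.mono fun _ hx => ENNReal.inv_ne_top.2 hx

section NormedSpace

variable {E : Type*} [NormedAddCommGroup E]

theorem sigmaFinite_of_lintegral_min_sq_norm_lt_top [MeasurableSpace E]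
    [OpensMeasurableSpace E] {ν : Measure E}
    (hν0 : ν {0} = 0) (hν : ∫⁻ x, ENNReal.ofReal (min (‖x‖ ^ 2) 1) ∂ν < ∞) : SigmaFinite ν := by
  refine sigmaFinite_of_lintegral_lt_top (by fun_prop) ?_
    (ae_of_all _ fun _ => ENNReal.ofReal_ne_top) hν
  filter_upwards [compl_mem_ae_iff.2 hν0] with x hx
  have hx : 0 < ‖x‖ := norm_pos_iff.2 hx
  simp only [ne_eq, ENNReal.ofReal_eq_zero, not_le]
  positivity

variable [NormedSpace ℝ E]

theorem min_sq_norm_smul_le (c : ℝ) (x : E) :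
    min (‖c • x‖ ^ 2) 1 ≤ (c ^ 2 + 1) * min (‖x‖ ^ 2) 1 := by
  rw [norm_smul, mul_pow, Real.norm_eq_abs, sq_abs]
  rcases le_total (‖x‖ ^ 2) 1 with hx | hx
  · rw [min_eq_left hx]
    nlinarith [min_le_left (c ^ 2 * ‖x‖ ^ 2) 1, sq_nonneg c, sq_nonneg ‖x‖]
  · rw [min_eq_right hx]
    nlinarith [min_le_right (c ^ 2 * ‖x‖ ^ 2) 1, sq_nonneg c]

theorem lintegral_lintegral_min_sq_norm_smul_lt_top [MeasurableSpace E]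
    {α : Type*} [MeasurableSpace α] {ρ : Measure α} [IsFiniteMeasure ρ] {ν : Measure E} {f : α → ℝ}
    (hf : ∫⁻ s, ENNReal.ofReal (f s ^ 2) ∂ρ < ∞)
    (hν : ∫⁻ x, ENNReal.ofReal (min (‖x‖ ^ 2) 1) ∂ν < ∞) :
    ∫⁻ s, ∫⁻ x, ENNReal.ofReal (min (‖f s • x‖ ^ 2) 1) ∂ν ∂ρ < ∞ := by
  set C := ∫⁻ x, ENNReal.ofReal (min (‖x‖ ^ 2) 1) ∂ν
  have hinner (s : α) : ∫⁻ x, ENNReal.ofReal (min (‖f s • x‖ ^ 2) 1) ∂ν ≤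
      (ENNReal.ofReal (f s ^ 2) + 1) * C := by
    rw [← lintegral_const_mul' _ _ (by finiteness)]
    refine lintegral_mono fun x => ?_
    rw [← ENNReal.ofReal_one, ← ENNReal.ofReal_add (sq_nonneg _) zero_le_one,
      ← ENNReal.ofReal_mul (by positivity)]
    exact ENNReal.ofReal_le_ofReal (min_sq_norm_smul_le _ _)
  calc ∫⁻ s, ∫⁻ x, ENNReal.ofReal (min (‖f s • x‖ ^ 2) 1) ∂ν ∂ρ
      ≤ ∫⁻ s, (ENNReal.ofReal (f s ^ 2) + 1) * C ∂ρ := lintegral_mono hinner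
    _ = (∫⁻ s, ENNReal.ofReal (f s ^ 2) ∂ρ + ρ univ) * C := by
      rw [lintegral_mul_const' _ _ hν.ne, lintegral_add_right _ measurable_const, lintegral_one]
    _ < ∞ := ENNReal.mul_lt_top (ENNReal.add_lt_top.2 ⟨hf, measure_lt_top ρ univ⟩) hν

end NormedSpace

theorem lintegral_eq_lintegral_lintegral_comp_of_measure_eq
    {α E : Type*} [MeasurableSpace α] [MeasurableSpace E] [Zero E]
    {ρ : Measure α} [SFinite ρ] {ν μ : Measure E} [SFinite ν]
    {φ : α → E → E} (hφ : Measurable (Function.uncurry φ))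
    (hμ : ∀ B : Set E, MeasurableSet B → B ⊆ {0}ᶜ → μ B = ∫⁻ s, ν (φ s ⁻¹' B) ∂ρ)
    {g : E → ℝ} (hg : Measurable g) (hg_nonneg : 0 ≤ g) (hg0 : g 0 = 0) :
    ∫⁻ y, ENNReal.ofReal (g y) ∂μ = ∫⁻ s, ∫⁻ x, ENNReal.ofReal (g (φ s x)) ∂ν ∂ρ := by
  have hlevel (t : ℝ) (ht : t ∈ Ioi 0) :
      μ {y | t < g y} = ∫⁻ s, ν {x | t < g (φ s x)} ∂ρ := by
    refine hμ _ (measurableSet_lt measurable_const hg) fun y hy hy0 => ?_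
    exact lt_asymm ht (by simpa [mem_singleton_iff.1 hy0, hg0] using hy)
  have hjoint : Measurable fun p : ℝ × α => ν {x | p.1 < g (φ p.2 x)} :=
    measurable_measure_prodMk_left <| measurableSet_lt measurable_fst.fst <|
      hg.comp <| hφ.comp <| measurable_fst.snd.prodMk measurable_snd
  calc ∫⁻ y, ENNReal.ofReal (g y) ∂μ
      = ∫⁻ t in Ioi 0, ∫⁻ s, ν {x | t < g (φ s x)} ∂ρ := by
        rw [lintegral_eq_lintegral_meas_lt μ (ae_of_all _ hg_nonneg) hg.aemeasurable]
        exact setLIntegral_congr_fun measurableSet_Ioi hlevel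
    _ = ∫⁻ s, (∫⁻ t in Ioi (0 : ℝ), ν {x | t < g (φ s x)}) ∂ρ :=
        lintegral_lintegral_swap hjoint.aemeasurable
    _ = ∫⁻ s, ∫⁻ x, ENNReal.ofReal (g (φ s x)) ∂ν ∂ρ := by
        refine lintegral_congr fun s => (lintegral_eq_lintegral_meas_lt ν
          (f := fun x => g (φ s x)) (ae_of_all _ fun x => hg_nonneg (φ s x)) ?_).symm
        exact (hg.comp (hφ.comp (measurable_const.prodMk measurable_id))).aemeasurable

theorem stmt_3_general (d : ℕ)
    (ν : Measure (EuclideanSpace ℝ (Fin d)))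
    (hν0 : ν {0} = 0)
    (hνfin : ∫⁻ x, ENNReal.ofReal (min (‖x‖ ^ 2) 1) ∂ν < ⊤)
    (a : ℝ) (f : ℝ → ℝ) (hf : Measurable f)
    (hf2 : ∫⁻ s in Set.Ioo 0 a, ENNReal.ofReal (f s ^ 2) < ⊤) :
    (∫⁻ s in Set.Ioo 0 a, ∫⁻ x, ENNReal.ofReal (min (‖f s • x‖ ^ 2) 1) ∂ν < ⊤) ∧
    ∀ μ : Measure (EuclideanSpace ℝ (Fin d)),
      μ {0} = 0 →
      (∀ B : Set (EuclideanSpace ℝ (Fin d)), MeasurableSet B → B ⊆ {0}ᶜ →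
        μ B = ∫⁻ s in Set.Ioo 0 a, ν {x | f s • x ∈ B}) →
      ∫⁻ x, ENNReal.ofReal (min (‖x‖ ^ 2) 1) ∂μ < ⊤ := by
  have : SigmaFinite ν := sigmaFinite_of_lintegral_min_sq_norm_lt_top hν0 hνfin
  have hdouble := lintegral_lintegral_min_sq_norm_smul_lt_top hf2 hνfin
  refine ⟨hdouble, fun μ _ hμ => ?_⟩
  rwa [lintegral_eq_lintegral_lintegral_comp_of_measure_eq
    (φ := fun s x => f s • x) ((hf.comp measurable_fst).smul measurable_snd) hμ (by fun_prop)
    (fun _ => by positivity) (by simp)]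

/-- If `ν` is a Lévy measure on `ℝ^d` and `f` is square integrable on `(0,a)`,
then `∫₀^a ∫ (|f(s)x|² ∧ 1) ν(dx) ds < ∞`; in particular the transformed measure
`(T_f ν)(B) = ∫₀^a ν({x : f(s)x ∈ B}) ds` (for `B ⊆ ℝ^d ∖ {0}`) is again a Lévy measure. -/
theorem stmt_3 (d : ℕ) (hd : 1 ≤ d)
    (ν : Measure (EuclideanSpace ℝ (Fin d)))
    (hν0 : ν {0} = 0)
    (hνfin : ∫⁻ x, ENNReal.ofReal (min (‖x‖ ^ 2) 1) ∂ν < ⊤)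
    (a : ℝ) (ha : 0 < a) (f : ℝ → ℝ) (hf : Measurable f)
    (hf2 : ∫⁻ s in Set.Ioo 0 a, ENNReal.ofReal (f s ^ 2) < ⊤) :
    (∫⁻ s in Set.Ioo 0 a, ∫⁻ x, ENNReal.ofReal (min (‖f s • x‖ ^ 2) 1) ∂ν < ⊤) ∧
    ∀ μ : Measure (EuclideanSpace ℝ (Fin d)),
      μ {0} = 0 →
      (∀ B : Set (EuclideanSpace ℝ (Fin d)), MeasurableSet B → B ⊆ {0}ᶜ →
        μ B = ∫⁻ s in Set.Ioo 0 a, ν {x | f s • x ∈ B}) →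
      ∫⁻ x, ENNReal.ofReal (min (‖x‖ ^ 2) 1) ∂μ < ⊤ :=
  stmt_3_general d ν hν0 hνfin a f hf hf2
end

section
/- Let ν be a Lévy measure on ℝ^d, let 0 < a < ∞, and let f : (0,a) → ℝ be measurable with ∫₀^a f(s)² ds < ∞. Then ∫₀^a |f(s)| ∫_{ℝ^d} |x| · |1/(1 + |f(s)x|²) − 1/(1 + |x|²)| ν(dx) ds ≤ (∫₀^a (f(s)²/2 + |f(s)|) ds) · ∫_{{|x| ≤ 1}} |x|² ν(dx) + (∫₀^a (|f(s)| + 1)/2 ds) · ν({x : |x| > 1}); in particular the left-hand side is finite. -/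
/-!
Write `m = |f s|` and `t = ‖x‖`. Over a common denominator,
`m t |1/(1 + m²t²) - 1/(1 + t²)| ≤ (m t³ + m³ t³) / ((1 + m²t²)(1 + t²))`, and the AM-GM
inequalities `2t ≤ 1 + t²`, `2mt ≤ 1 + m²t²` bound the right-hand side both by `(m²/2 + m) t²`
(used on the unit ball) and by `(m + 1)/2` (used outside it). Integrating in `x` and then in `s`
gives the inequality; the factors on the right are finite because `f ∈ L²(0, a)`, `(0, a)` has
finite length and `ν` is a Lévy measure.
-/

open MeasureTheory

lemma mul_abs_inv_sub_inv_le (m t : ℝ) (hm : 0 ≤ m) (ht : 0 ≤ t) :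
    m * (t * |(1 + (m * t) ^ 2)⁻¹ - (1 + t ^ 2)⁻¹|) ≤
      (m * t ^ 3 + m ^ 3 * t ^ 3) / ((1 + (m * t) ^ 2) * (1 + t ^ 2)) := by
  have hP : 0 < 1 + (m * t) ^ 2 := by positivity
  have hQ : 0 < 1 + t ^ 2 := by positivity
  have hdiff : |(1 + t ^ 2) - (1 + (m * t) ^ 2)| ≤ t ^ 2 + (m * t) ^ 2 := by
    rw [abs_le]; constructor <;> nlinarith [sq_nonneg t, sq_nonneg (m * t)]
  rw [inv_sub_inv hP.ne' hQ.ne', abs_div, abs_of_pos (mul_pos hP hQ), ← mul_div_assoc,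
    ← mul_div_assoc]
  gcongr
  calc m * (t * |(1 + t ^ 2) - (1 + (m * t) ^ 2)|) ≤ m * (t * (t ^ 2 + (m * t) ^ 2)) := by
        gcongr
    _ = m * t ^ 3 + m ^ 3 * t ^ 3 := by ring

lemma mul_abs_inv_sub_inv_le_sq (m t : ℝ) (hm : 0 ≤ m) (ht : 0 ≤ t) :
    m * (t * |(1 + (m * t) ^ 2)⁻¹ - (1 + t ^ 2)⁻¹|) ≤ (m ^ 2 / 2 + m) * t ^ 2 := by
  refine (mul_abs_inv_sub_inv_le m t hm ht).trans ?_
  rw [div_le_iff₀ (by positivity)]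
  have h1 : m * t ^ 3 ≤ m * t ^ 2 * (1 + t ^ 2) / 2 := by
    nlinarith [mul_nonneg (mul_nonneg hm (sq_nonneg t)) (sq_nonneg (t - 1))]
  have h2 : m ^ 3 * t ^ 3 ≤ m ^ 2 / 2 * t ^ 2 * (1 + (m * t) ^ 2) := by
    nlinarith [mul_nonneg (mul_nonneg (sq_nonneg m) (sq_nonneg t)) (sq_nonneg (m * t - 1))]
  have h3 : 0 ≤ m * t ^ 2 * (1 + t ^ 2) * (1 + 2 * (m * t) ^ 2) := by positivity
  have h4 : 0 ≤ m ^ 2 * t ^ 2 * (1 + (m * t) ^ 2) * t ^ 2 := by positivity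
  linarith

lemma mul_abs_inv_sub_inv_le_half (m t : ℝ) (hm : 0 ≤ m) (ht : 0 ≤ t) :
    m * (t * |(1 + (m * t) ^ 2)⁻¹ - (1 + t ^ 2)⁻¹|) ≤ (m + 1) / 2 := by
  refine (mul_abs_inv_sub_inv_le m t hm ht).trans ?_
  rw [div_le_iff₀ (by positivity)]
  have h1 : m * t ^ 3 ≤ (1 + (m * t) ^ 2) * (1 + t ^ 2) / 2 := by
    nlinarith [mul_nonneg (sq_nonneg (m * t - 1)) (sq_nonneg t)]
  have h2 : m ^ 3 * t ^ 3 ≤ m * (1 + (m * t) ^ 2) * (1 + t ^ 2) / 2 := by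
    nlinarith [mul_nonneg (mul_nonneg hm (sq_nonneg (m * t))) (sq_nonneg (t - 1)),
      mul_nonneg hm (sq_nonneg (m * t)),
      mul_nonneg hm (mul_nonneg (sq_nonneg (m * t)) (sq_nonneg t))]
  linarith

section LevyMeasure

variable {E : Type*} [NormedAddCommGroup E] [MeasurableSpace E] [OpensMeasurableSpace E]
  (μ : Measure E)

lemma ofReal_abs_mul_lintegral_centering_le [NormedSpace ℝ E] (c : ℝ) :
    ENNReal.ofReal |c| *
        ∫⁻ x, ENNReal.ofReal (‖x‖ * |(1 + ‖c • x‖ ^ 2)⁻¹ - (1 + ‖x‖ ^ 2)⁻¹|) ∂μ ≤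
      ENNReal.ofReal (c ^ 2 / 2 + |c|) * ∫⁻ x in {x : E | ‖x‖ ≤ 1}, ENNReal.ofReal (‖x‖ ^ 2) ∂μ +
        ENNReal.ofReal ((|c| + 1) / 2) * μ {x : E | 1 < ‖x‖} := by
  have hS : MeasurableSet {x : E | ‖x‖ ≤ 1} := measurableSet_le measurable_norm measurable_const
  have hScompl : {x : E | ‖x‖ ≤ 1}ᶜ = {x : E | 1 < ‖x‖} := by
    simp only [Set.compl_ofPred, not_le]
  have hpointwise (x : E) :
      ENNReal.ofReal |c| * ENNReal.ofReal (‖x‖ * |(1 + ‖c • x‖ ^ 2)⁻¹ - (1 + ‖x‖ ^ 2)⁻¹|) =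
        ENNReal.ofReal (|c| * (‖x‖ * |(1 + (|c| * ‖x‖) ^ 2)⁻¹ - (1 + ‖x‖ ^ 2)⁻¹|)) := by
    rw [← ENNReal.ofReal_mul (abs_nonneg c), norm_smul, Real.norm_eq_abs]
  rw [← lintegral_const_mul' _ _ ENNReal.ofReal_ne_top, ← lintegral_add_compl _ hS,
    ← lintegral_const_mul' _ _ ENNReal.ofReal_ne_top, hScompl, ← setLIntegral_const]
  simp only [hpointwise]
  gcongr with x
  · rw [← ENNReal.ofReal_mul (by positivity), ← sq_abs c]
    exact ENNReal.ofReal_le_ofReal (mul_abs_inv_sub_inv_le_sq _ _ (abs_nonneg c) (norm_nonneg x))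
  · exact mul_abs_inv_sub_inv_le_half _ _ (abs_nonneg c) (norm_nonneg x)

variable {μ}

lemma setLIntegral_norm_sq_lt_top_of_lintegral_min_lt_top
    (hμ : ∫⁻ x, ENNReal.ofReal (min (‖x‖ ^ 2) 1) ∂μ < ⊤) :
    ∫⁻ x in {x : E | ‖x‖ ≤ 1}, ENNReal.ofReal (‖x‖ ^ 2) ∂μ < ⊤ := by
  refine lt_of_le_of_lt ?_ hμ
  calc ∫⁻ x in {x : E | ‖x‖ ≤ 1}, ENNReal.ofReal (‖x‖ ^ 2) ∂μ
      ≤ ∫⁻ x in {x : E | ‖x‖ ≤ 1}, ENNReal.ofReal (min (‖x‖ ^ 2) 1) ∂μ := by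
        refine setLIntegral_mono' (measurableSet_le measurable_norm measurable_const) fun x hx => ?_
        rw [min_eq_left (pow_le_one₀ (norm_nonneg x) hx)]
    _ ≤ ∫⁻ x, ENNReal.ofReal (min (‖x‖ ^ 2) 1) ∂μ := setLIntegral_le_lintegral _ _

lemma measure_one_lt_norm_lt_top_of_lintegral_min_lt_top
    (hμ : ∫⁻ x, ENNReal.ofReal (min (‖x‖ ^ 2) 1) ∂μ < ⊤) :
    μ {x : E | 1 < ‖x‖} < ⊤ := by
  refine lt_of_le_of_lt ?_ hμ
  calc μ {x : E | 1 < ‖x‖} = ∫⁻ _ in {x : E | 1 < ‖x‖}, 1 ∂μ := (setLIntegral_one _).symm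
    _ ≤ ∫⁻ x in {x : E | 1 < ‖x‖}, ENNReal.ofReal (min (‖x‖ ^ 2) 1) ∂μ := by
        refine setLIntegral_mono' (measurableSet_lt measurable_const measurable_norm) fun x hx => ?_
        rw [min_eq_right (one_le_pow₀ (le_of_lt hx)), ENNReal.ofReal_one]
    _ ≤ ∫⁻ x, ENNReal.ofReal (min (‖x‖ ^ 2) 1) ∂μ := setLIntegral_le_lintegral _ _

end LevyMeasure

section TimeIntegral

variable {α : Type*} [MeasurableSpace α] {ρ : Measure α} {f : α → ℝ}

lemma lintegral_ofReal_abs_mul_lintegral_centering_le {E : Type*} [NormedAddCommGroup E]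
    [NormedSpace ℝ E] [MeasurableSpace E] [OpensMeasurableSpace E] (μ : Measure E)
    (hf : Measurable f) :
    ∫⁻ s, ENNReal.ofReal |f s| *
        ∫⁻ x, ENNReal.ofReal (‖x‖ * |(1 + ‖f s • x‖ ^ 2)⁻¹ - (1 + ‖x‖ ^ 2)⁻¹|) ∂μ ∂ρ ≤
      (∫⁻ s, ENNReal.ofReal (f s ^ 2 / 2 + |f s|) ∂ρ) *
          ∫⁻ x in {x : E | ‖x‖ ≤ 1}, ENNReal.ofReal (‖x‖ ^ 2) ∂μ +
        (∫⁻ s, ENNReal.ofReal ((|f s| + 1) / 2) ∂ρ) * μ {x : E | 1 < ‖x‖} := by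
  refine (lintegral_mono fun s => ofReal_abs_mul_lintegral_centering_le μ (f s)).trans_eq ?_
  rw [lintegral_add_left (by fun_prop), lintegral_mul_const _ (by fun_prop),
    lintegral_mul_const _ (by fun_prop)]

lemma lintegral_ofReal_lt_top_of_le_sq_add [IsFiniteMeasure ρ] {g : α → ℝ} (C : ℝ)
    (hf2 : ∫⁻ s, ENNReal.ofReal (f s ^ 2) ∂ρ < ⊤) (hg : ∀ s, g s ≤ f s ^ 2 + C) :
    ∫⁻ s, ENNReal.ofReal (g s) ∂ρ < ⊤ := by
  calc ∫⁻ s, ENNReal.ofReal (g s) ∂ρ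
      ≤ ∫⁻ s, (ENNReal.ofReal (f s ^ 2) + ENNReal.ofReal C) ∂ρ :=
        lintegral_mono fun s => (ENNReal.ofReal_le_ofReal (hg s)).trans ENNReal.ofReal_add_le
    _ = ∫⁻ s, ENNReal.ofReal (f s ^ 2) ∂ρ + ENNReal.ofReal C * ρ Set.univ := by
        rw [lintegral_add_right _ measurable_const, lintegral_const]
    _ < ⊤ := ENNReal.add_lt_top.mpr
        ⟨hf2, ENNReal.mul_lt_top ENNReal.ofReal_lt_top (measure_lt_top _ _)⟩

end TimeIntegral

theorem stmt_5_general (d : ℕ)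
    (ν : Measure (EuclideanSpace ℝ (Fin d)))
    (hνfin : ∫⁻ x, ENNReal.ofReal (min (‖x‖ ^ 2) 1) ∂ν < ⊤)
    (a : ℝ) (f : ℝ → ℝ) (hf : Measurable f)
    (hf2 : ∫⁻ s in Set.Ioo 0 a, ENNReal.ofReal (f s ^ 2) < ⊤) :
    (∫⁻ s in Set.Ioo (0 : ℝ) a, ENNReal.ofReal |f s| *
        ∫⁻ x, ENNReal.ofReal (‖x‖ * |(1 + ‖f s • x‖ ^ 2)⁻¹ - (1 + ‖x‖ ^ 2)⁻¹|) ∂ν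
      ≤ (∫⁻ s in Set.Ioo (0 : ℝ) a, ENNReal.ofReal (f s ^ 2 / 2 + |f s|)) *
          (∫⁻ x in {x : EuclideanSpace ℝ (Fin d) | ‖x‖ ≤ 1}, ENNReal.ofReal (‖x‖ ^ 2) ∂ν) +
        (∫⁻ s in Set.Ioo (0 : ℝ) a, ENNReal.ofReal ((|f s| + 1) / 2)) *
          ν {x : EuclideanSpace ℝ (Fin d) | 1 < ‖x‖}) ∧
    (∫⁻ s in Set.Ioo (0 : ℝ) a, ENNReal.ofReal |f s| *
        ∫⁻ x, ENNReal.ofReal (‖x‖ * |(1 + ‖f s • x‖ ^ 2)⁻¹ - (1 + ‖x‖ ^ 2)⁻¹|) ∂ν < ⊤) := by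
  have bound := lintegral_ofReal_abs_mul_lintegral_centering_le
    (ρ := volume.restrict (Set.Ioo 0 a)) ν hf
  refine ⟨bound, bound.trans_lt ?_⟩
  have hcoeff_ball := lintegral_ofReal_lt_top_of_le_sq_add
    (g := fun s => f s ^ 2 / 2 + |f s|) (1 / 2) hf2 fun s => by
      nlinarith [sq_nonneg (|f s| - 1), sq_abs (f s)]
  have hcoeff_tail := lintegral_ofReal_lt_top_of_le_sq_add
    (g := fun s => (|f s| + 1) / 2) 1 hf2 fun s => by
      nlinarith [sq_nonneg (|f s| - 1), sq_abs (f s)]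
  exact ENNReal.add_lt_top.mpr
    ⟨ENNReal.mul_lt_top hcoeff_ball (setLIntegral_norm_sq_lt_top_of_lintegral_min_lt_top hνfin),
      ENNReal.mul_lt_top hcoeff_tail (measure_one_lt_norm_lt_top_of_lintegral_min_lt_top hνfin)⟩

/-- Bound for the centering-term integral
`∫₀^a |f(s)| ∫ |x| |1/(1+|f(s)x|²) − 1/(1+|x|²)| ν(dx) ds`; in particular it is finite. -/
theorem stmt_5 (d : ℕ) (hd : 1 ≤ d)
    (ν : Measure (EuclideanSpace ℝ (Fin d)))
    (hν0 : ν {0} = 0)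
    (hνfin : ∫⁻ x, ENNReal.ofReal (min (‖x‖ ^ 2) 1) ∂ν < ⊤)
    (a : ℝ) (ha : 0 < a) (f : ℝ → ℝ) (hf : Measurable f)
    (hf2 : ∫⁻ s in Set.Ioo 0 a, ENNReal.ofReal (f s ^ 2) < ⊤) :
    (∫⁻ s in Set.Ioo (0 : ℝ) a, ENNReal.ofReal |f s| *
        ∫⁻ x, ENNReal.ofReal (‖x‖ * |(1 + ‖f s • x‖ ^ 2)⁻¹ - (1 + ‖x‖ ^ 2)⁻¹|) ∂ν
      ≤ (∫⁻ s in Set.Ioo (0 : ℝ) a, ENNReal.ofReal (f s ^ 2 / 2 + |f s|)) *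
          (∫⁻ x in {x : EuclideanSpace ℝ (Fin d) | ‖x‖ ≤ 1}, ENNReal.ofReal (‖x‖ ^ 2) ∂ν) +
        (∫⁻ s in Set.Ioo (0 : ℝ) a, ENNReal.ofReal ((|f s| + 1) / 2)) *
          ν {x : EuclideanSpace ℝ (Fin d) | 1 < ‖x‖}) ∧
    (∫⁻ s in Set.Ioo (0 : ℝ) a, ENNReal.ofReal |f s| *
        ∫⁻ x, ENNReal.ofReal (‖x‖ * |(1 + ‖f s • x‖ ^ 2)⁻¹ - (1 + ‖x‖ ^ 2)⁻¹|) ∂ν < ⊤) :=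
  stmt_5_general d ν hνfin a f hf hf2
end

section
/- Let ν be a σ-finite Borel measure on ℝ^d with ν({0}) = 0. For j = 0, 1, let 0 < a_j < ∞ and let f_j : (0,a_j) → ℝ be measurable. Then the two iterated transforms commute: T_{f₁}(T_{f₀} ν)(B) = T_{f₀}(T_{f₁} ν)(B) for every Borel set B ⊆ ℝ^d ∖ {0}. -/
open MeasureTheory

/-- Commutation of the transforms `T_{f₀}`, `T_{f₁}` of a σ-finite measure `ν` with
`ν({0}) = 0`, where `(T_f ν)(B) = ∫₀^a ν({x : f(s)x ∈ B}) ds`: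
`T_{f₁}(T_{f₀} ν)(B) = T_{f₀}(T_{f₁} ν)(B)` for Borel `B ⊆ ℝ^d ∖ {0}`. -/
theorem stmt_6 (d : ℕ) (hd : 1 ≤ d)
    (ν : Measure (EuclideanSpace ℝ (Fin d))) [SigmaFinite ν]
    (hν0 : ν {0} = 0)
    (a₀ a₁ : ℝ) (ha₀ : 0 < a₀) (ha₁ : 0 < a₁)
    (f₀ f₁ : ℝ → ℝ) (hf₀ : Measurable f₀) (hf₁ : Measurable f₁)
    (B : Set (EuclideanSpace ℝ (Fin d))) (hB : MeasurableSet B) (hB0 : B ⊆ {0}ᶜ) :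
    ∫⁻ u in Set.Ioo (0 : ℝ) a₁, ∫⁻ s in Set.Ioo (0 : ℝ) a₀,
        ν {x | f₀ s • x ∈ {y | f₁ u • y ∈ B}} =
      ∫⁻ s in Set.Ioo (0 : ℝ) a₀, ∫⁻ u in Set.Ioo (0 : ℝ) a₁,
        ν {x | f₁ u • x ∈ {y | f₀ s • y ∈ B}} := by
  have hS : MeasurableSet {p : ℝ × EuclideanSpace ℝ (Fin d) | p.1 • p.2 ∈ B} :=
    (measurable_fst.smul measurable_snd) hB
  have hg : Measurable fun c : ℝ => ν {x | c • x ∈ B} := by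
    simpa [Set.preimage, Set.mem_setOf_eq] using measurable_measure_prodMk_left hS
  have key : ∀ (c c' : ℝ), {x : EuclideanSpace ℝ (Fin d) | c • x ∈ {y | c' • y ∈ B}}
      = {x | (c' * c) • x ∈ B} := by
    intro c c'
    ext x
    simp [Set.mem_setOf_eq, smul_smul]
  calc ∫⁻ u in Set.Ioo (0 : ℝ) a₁, ∫⁻ s in Set.Ioo (0 : ℝ) a₀,
        ν {x | f₀ s • x ∈ {y | f₁ u • y ∈ B}}
      = ∫⁻ u in Set.Ioo (0 : ℝ) a₁, ∫⁻ s in Set.Ioo (0 : ℝ) a₀,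
        ν {x | (f₁ u * f₀ s) • x ∈ B} := by
        simp only [key]
    _ = ∫⁻ s in Set.Ioo (0 : ℝ) a₀, ∫⁻ u in Set.Ioo (0 : ℝ) a₁,
        ν {x | (f₁ u * f₀ s) • x ∈ B} := by
        apply lintegral_lintegral_swap
        exact (hg.comp ((hf₁.comp measurable_fst).mul
          (hf₀.comp measurable_snd))).aemeasurable
    _ = ∫⁻ s in Set.Ioo (0 : ℝ) a₀, ∫⁻ u in Set.Ioo (0 : ℝ) a₁,
        ν {x | f₁ u • x ∈ {y | f₀ s • y ∈ B}} := by
        simp only [key, mul_comm]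
end

section
/- Let 0 < t₀ ≤ ∞ and let p : (0,t₀) → (0,∞) be decreasing with ∫₀^{t₀} (1 + u²) p(u) du < ∞. Let σ be a Borel measure on (0,∞) with ∫₀^∞ (r² ∧ 1) σ(dr) < ∞. Define ℓ̃(u) = ∫_{(u/t₀, ∞)} p(u/r) r^{-1} σ(dr) for u > 0 (with u/t₀ interpreted as 0 when t₀ = ∞). Then ℓ̃ is decreasing on (0,∞), and for every s > 0, ∫₀^{t₀} p(t) σ((s/t, ∞)) dt = ∫_s^∞ ℓ̃(u) du. -/
/-!
Write `σ((s/t,∞)) = ∫ 1{s < t r} σ(dr)` and exchange the `t`- and `r`-integrals by Tonelli. For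
fixed `r > 0` the substitution `t = u / r` turns the inner integral into
`∫_s^∞ p(u/r) r⁻¹ 1{u/r < t₀} du`, and exchanging back gives `∫_s^∞ ℓ̃(u) du`. Tonelli applies
because `σ` restricted to `(0,∞)` is σ-finite (its tails `σ((c,∞))` are finite since
`∫ (r² ∧ 1) dσ < ∞`) and because the truncated kernel, being monotone, is measurable.
As `u` grows the domain `(u/t₀,∞)` of `ℓ̃(u)` shrinks and `p(u/r)` decreases, so `ℓ̃` decreases.
-/

open MeasureTheory Set
open scoped ENNReal

theorem AntitoneOn.measurable_indicator {α : Type*} [LinearOrder α] [TopologicalSpace α]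
    [OrderClosedTopology α] [MeasurableSpace α] [BorelSpace α]
    {f : α → ℝ≥0∞} {s : Set α} (hf : AntitoneOn f s) (hs : MeasurableSet s) :
    Measurable (s.indicator f) := by
  -- the supremum of `f` over `s ∩ Ici t` is a globally antitone function agreeing with `f` on `s`
  set g : α → ℝ≥0∞ := fun t => ⨆ x ∈ s ∩ Ici t, f x
  have hg : Antitone g := fun t t' htt' => biSup_mono fun x hx => ⟨hx.1, htt'.trans hx.2⟩
  have hfg : s.indicator f = s.indicator g := by
    refine indicator_congr fun t ht => le_antisymm ?_ ?_
    · exact le_biSup f ⟨ht, le_rfl⟩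
    · exact iSup₂_le fun x hx => hf ht hx.1 hx.2
  rw [hfg]
  exact hg.measurable.indicator hs

theorem sigmaFinite_of_lintegral_ne_top {α : Type*} [MeasurableSpace α] {μ : Measure α}
    {f : α → ℝ≥0∞} (hf : Measurable f) (hf_pos : ∀ᵐ x ∂μ, f x ≠ 0)
    (hf_fin : ∫⁻ x, f x ∂μ ≠ ∞) : SigmaFinite μ := by
  refine Measure.sigmaFinite_of_countable
    (S := insert {x | f x = 0} (range fun n : ℕ => {x | ((n : ℝ≥0∞) + 1)⁻¹ ≤ f x})) ?_ ?_ ?_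
  · exact (countable_range _).insert _
  · rintro _ (rfl | ⟨n, rfl⟩)
    · have : μ {x | f x = 0} = 0 := by simpa using ae_iff.1 hf_pos
      simp [this]
    · refine (meas_ge_le_lintegral_div hf.aemeasurable (by simp) (by simp)).trans_lt ?_
      exact ENNReal.div_lt_top hf_fin (by simp)
  · refine eq_univ_of_forall fun x => ?_
    by_cases hx : f x = 0
    · exact mem_sUnion_of_mem hx (mem_insert _ _)
    · obtain ⟨n, hn⟩ := ENNReal.exists_inv_nat_lt hx
      refine mem_sUnion_of_mem ?_ (mem_insert_of_mem _ ⟨n, rfl⟩)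
      exact (ENNReal.inv_le_inv.2 le_self_add).trans hn.le

theorem lintegral_comp_div_const {f : ℝ → ℝ≥0∞} (hf : Measurable f) {r : ℝ} (hr : 0 < r) :
    ∫⁻ u, f (u / r) = ENNReal.ofReal r * ∫⁻ t, f t := by
  have hmap : Measure.map (· / r) volume = ENNReal.ofReal r • volume := by
    simpa [div_eq_mul_inv, abs_of_pos hr] using Real.map_volume_mul_right (inv_ne_zero hr.ne')
  rw [← lintegral_map hf (measurable_div_const r), hmap, lintegral_smul_measure, smul_eq_mul]

theorem measurable_indicator_Ioi_mul (s : ℝ) :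
    Measurable fun x : ℝ × ℝ => (Ioi s).indicator (1 : ℝ → ℝ≥0∞) (x.1 * x.2) :=
  (measurable_one.indicator measurableSet_Ioi).comp (measurable_fst.mul measurable_snd)

theorem lintegral_mul_indicator_Ioi_mul {q : ℝ → ℝ≥0∞} (hq : Measurable q)
    (hq_nonpos : ∀ t ≤ 0, q t = 0) {s : ℝ} (hs : 0 ≤ s) (r : ℝ) :
    ∫⁻ t, q t * (Ioi s).indicator 1 (t * r) = ∫⁻ u in Ioi s, q (u / r) * ENNReal.ofReal r⁻¹ := by
  rcases le_or_gt r 0 with hr | hr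
  · have hlhs : ∀ t, q t * (Ioi s).indicator 1 (t * r) = 0 := by
      intro t
      rcases le_or_gt t 0 with ht | ht
      · rw [hq_nonpos t ht, zero_mul]
      · have : t * r ∉ Ioi s := not_lt.2 (hs.trans' (mul_nonpos_of_nonneg_of_nonpos ht.le hr))
        rw [indicator_of_notMem this, mul_zero]
    have hrhs : ∀ u ∈ Ioi s, q (u / r) * ENNReal.ofReal r⁻¹ = 0 := fun u hu => by
      rw [hq_nonpos _ (div_nonpos_of_nonneg_of_nonpos (hs.trans hu.out.le) hr), zero_mul]
    rw [lintegral_congr hlhs, lintegral_zero, setLIntegral_congr_fun measurableSet_Ioi hrhs,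
      lintegral_zero]
  · set f : ℝ → ℝ≥0∞ := fun t => q t * (Ioi s).indicator 1 (t * r)
    have hf : Measurable f :=
      hq.mul ((measurable_indicator_Ioi_mul s).comp (measurable_id.prodMk measurable_const))
    have hfdiv : ∀ u, f (u / r) = (Ioi s).indicator (fun u => q (u / r)) u := fun u => by
      simp only [f, div_mul_cancel₀ u hr.ne']
      by_cases hu : u ∈ Ioi s <;> simp [hu]
    calc ∫⁻ t, f t
        = ENNReal.ofReal r⁻¹ * ∫⁻ u, f (u / r) := by
          rw [lintegral_comp_div_const hf hr, ← mul_assoc, ← ENNReal.ofReal_mul (by positivity),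
            inv_mul_cancel₀ hr.ne', ENNReal.ofReal_one, one_mul]
      _ = ∫⁻ u in Ioi s, q (u / r) * ENNReal.ofReal r⁻¹ := by
          rw [lintegral_congr hfdiv, lintegral_indicator measurableSet_Ioi, mul_comm,
            lintegral_mul_const' _ _ ENNReal.ofReal_ne_top]

theorem lintegral_mul_measure_Ioi_div {σ : Measure ℝ} [SFinite σ] {q : ℝ → ℝ≥0∞}
    (hq : Measurable q) (hq_nonpos : ∀ t ≤ 0, q t = 0) {s : ℝ} (hs : 0 ≤ s) :
    ∫⁻ t, q t * σ (Ioi (s / t)) = ∫⁻ u in Ioi s, ∫⁻ r, q (u / r) * ENNReal.ofReal r⁻¹ ∂σ := by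
  have hσ : ∀ t, q t * σ (Ioi (s / t)) = ∫⁻ r, q t * (Ioi s).indicator 1 (t * r) ∂σ := by
    intro t
    rcases le_or_gt t 0 with ht | ht
    · simp [hq_nonpos t ht]
    · have hpre : (t * ·) ⁻¹' Ioi s = Ioi (s / t) := by
        ext r; simp [div_lt_iff₀' ht]
      have hmeas : Measurable fun r => (Ioi s).indicator (1 : ℝ → ℝ≥0∞) (t * r) :=
        (measurable_indicator_Ioi_mul s).comp measurable_prodMk_left
      rw [lintegral_const_mul _ hmeas, ← hpre,
        ← lintegral_indicator_one ((measurable_const_mul t) measurableSet_Ioi)]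
      rfl
  calc ∫⁻ t, q t * σ (Ioi (s / t))
      = ∫⁻ r, (∫⁻ t, q t * (Ioi s).indicator 1 (t * r)) ∂σ := by
        simp_rw [hσ]
        exact lintegral_lintegral_swap
          ((hq.comp measurable_fst).mul (measurable_indicator_Ioi_mul s)).aemeasurable
    _ = ∫⁻ r, (∫⁻ u in Ioi s, q (u / r) * ENNReal.ofReal r⁻¹) ∂σ := by
        simp_rw [lintegral_mul_indicator_Ioi_mul hq hq_nonpos hs]
    _ = ∫⁻ u in Ioi s, ∫⁻ r, q (u / r) * ENNReal.ofReal r⁻¹ ∂σ :=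
        lintegral_lintegral_swap ((hq.comp (measurable_snd.div measurable_fst)).mul
          (ENNReal.measurable_ofReal.comp measurable_fst.inv)).aemeasurable

theorem sigmaFinite_restrict_Ioi_of_lintegral_min_sq_one_lt_top {σ : Measure ℝ}
    (hσ : ∫⁻ r, ENNReal.ofReal (min (r ^ 2) 1) ∂σ < ∞) : SigmaFinite (σ.restrict (Ioi 0)) := by
  refine sigmaFinite_of_lintegral_ne_top (f := fun r => ENNReal.ofReal (min (r ^ 2) 1))
    (by fun_prop) ?_ ((setLIntegral_le_lintegral _ _).trans_lt hσ).ne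
  filter_upwards [ae_restrict_mem measurableSet_Ioi] with r (hr : 0 < r)
  positivity

theorem toReal_ofReal_div_lt_iff {t₀ : ℝ≥0∞} (ht₀ : t₀ ≠ 0) (u : ℝ) {r : ℝ} (hr : 0 < r) :
    (ENNReal.ofReal u / t₀).toReal < r ↔ ENNReal.ofReal (u / r) < t₀ := by
  rw [← ENNReal.lt_ofReal_iff_toReal_lt (ENNReal.div_ne_top ENNReal.ofReal_ne_top ht₀),
    ENNReal.div_lt_iff (Or.inl ht₀) (Or.inr ENNReal.ofReal_ne_top),
    ENNReal.ofReal_div_of_pos hr, ENNReal.div_lt_iff (Or.inl (ENNReal.ofReal_pos.2 hr).ne')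
      (Or.inl ENNReal.ofReal_ne_top), mul_comm]

/-- The radial density `ℓ̃` of the transformed Lévy measure. -/
noncomputable def radialDensity (t₀ : ℝ≥0∞) (p : ℝ → ℝ) (σ : Measure ℝ) (u : ℝ) : ℝ≥0∞ :=
  ∫⁻ r in Ioi ((ENNReal.ofReal u / t₀).toReal), ENNReal.ofReal (p (u / r) * r⁻¹) ∂σ

theorem radialDensity_anti {t₀ : ℝ≥0∞} (ht₀ : t₀ ≠ 0) {p : ℝ → ℝ}
    (hp : ∀ u v : ℝ, 0 < u → u ≤ v → ENNReal.ofReal v < t₀ → p v ≤ p u) (σ : Measure ℝ)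
    {u v : ℝ} (hu : 0 < u) (huv : u ≤ v) : radialDensity t₀ p σ v ≤ radialDensity t₀ p σ u := by
  have hsub : Ioi ((ENNReal.ofReal v / t₀).toReal) ⊆ Ioi ((ENNReal.ofReal u / t₀).toReal) :=
    Ioi_subset_Ioi <| ENNReal.toReal_mono (ENNReal.div_ne_top ENNReal.ofReal_ne_top ht₀) <|
      ENNReal.div_le_div_right (ENNReal.ofReal_le_ofReal huv) t₀
  refine (setLIntegral_mono' measurableSet_Ioi fun r hr => ?_).trans (lintegral_mono_set hsub)
  have hr₀ : 0 < r := ENNReal.toReal_nonneg.trans_lt hr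
  have hvr : ENNReal.ofReal (v / r) < t₀ := (toReal_ofReal_div_lt_iff ht₀ v hr₀).1 hr
  refine ENNReal.ofReal_le_ofReal (mul_le_mul_of_nonneg_right ?_ (inv_nonneg.2 hr₀.le))
  exact hp _ _ (div_pos hu hr₀) (div_le_div_of_nonneg_right huv hr₀.le) hvr

theorem indicator_div_mul_ofReal_inv {t₀ : ℝ≥0∞} (ht₀ : t₀ ≠ 0) (p : ℝ → ℝ) {u : ℝ} (hu : 0 < u)
    (r : ℝ) :
    {t : ℝ | 0 < t ∧ ENNReal.ofReal t < t₀}.indicator (fun t => ENNReal.ofReal (p t)) (u / r) *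
        ENNReal.ofReal r⁻¹ =
      (Ioi ((ENNReal.ofReal u / t₀).toReal)).indicator
        (fun r => ENNReal.ofReal (p (u / r) * r⁻¹)) r := by
  rcases le_or_gt r 0 with hr | hr
  · have hur : ¬ 0 < u / r := (div_nonpos_of_nonneg_of_nonpos hu.le hr).not_gt
    have hmem : r ∉ Ioi ((ENNReal.ofReal u / t₀).toReal) := (hr.trans ENNReal.toReal_nonneg).not_gt
    rw [indicator_of_notMem (fun h => hur h.1), indicator_of_notMem hmem, zero_mul]
  · have hmem : u / r ∈ {t : ℝ | 0 < t ∧ ENNReal.ofReal t < t₀} ↔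
        r ∈ Ioi ((ENNReal.ofReal u / t₀).toReal) := by
      simp only [mem_ofPred_eq, mem_Ioi, div_pos hu hr, true_and, toReal_ofReal_div_lt_iff ht₀ u hr]
    by_cases h : r ∈ Ioi ((ENNReal.ofReal u / t₀).toReal)
    · rw [indicator_of_mem (hmem.2 h), indicator_of_mem h, ENNReal.ofReal_mul' (by positivity)]
    · rw [indicator_of_notMem (mt hmem.1 h), indicator_of_notMem h, zero_mul]

theorem radialDensity_eq_lintegral {t₀ : ℝ≥0∞} (ht₀ : t₀ ≠ 0) (p : ℝ → ℝ) (σ : Measure ℝ) {u : ℝ}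
    (hu : 0 < u) :
    radialDensity t₀ p σ u =
      ∫⁻ r, {t : ℝ | 0 < t ∧ ENNReal.ofReal t < t₀}.indicator (fun t => ENNReal.ofReal (p t))
        (u / r) * ENNReal.ofReal r⁻¹ ∂σ.restrict (Ioi 0) := by
  rw [lintegral_congr (indicator_div_mul_ofReal_inv ht₀ p hu), lintegral_indicator measurableSet_Ioi,
    Measure.restrict_restrict_of_subset (Ioi_subset_Ioi ENNReal.toReal_nonneg), radialDensity]

theorem stmt_8_general (t₀ : ℝ≥0∞) (ht₀ : 0 < t₀)
    (p : ℝ → ℝ)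
    (hp_dec : ∀ u v : ℝ, 0 < u → u ≤ v → ENNReal.ofReal v < t₀ → p v ≤ p u)
    (σ : Measure ℝ)
    (hσfin : ∫⁻ r, ENNReal.ofReal (min (r ^ 2) 1) ∂σ < ⊤)
    (ℓ : ℝ → ℝ≥0∞)
    (hℓ : ∀ u : ℝ, ℓ u = ∫⁻ r in Set.Ioi ((ENNReal.ofReal u / t₀).toReal),
        ENNReal.ofReal (p (u / r) * r⁻¹) ∂σ) :
    (∀ u v : ℝ, 0 < u → u ≤ v → ℓ v ≤ ℓ u) ∧
    (∀ s : ℝ, 0 < s →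
      ∫⁻ t in {t : ℝ | 0 < t ∧ ENNReal.ofReal t < t₀},
          ENNReal.ofReal (p t) * σ (Set.Ioi (s / t)) =
        ∫⁻ u in Set.Ioi s, ℓ u) := by
  obtain rfl : ℓ = radialDensity t₀ p σ := funext hℓ
  refine ⟨fun u v hu huv => radialDensity_anti ht₀.ne' hp_dec σ hu huv, fun s hs => ?_⟩
  set S := {t : ℝ | 0 < t ∧ ENNReal.ofReal t < t₀}
  set q := S.indicator fun t => ENNReal.ofReal (p t)
  have hS : MeasurableSet S :=
    (measurableSet_lt measurable_const measurable_id).inter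
      (measurableSet_lt ENNReal.measurable_ofReal measurable_const)
  have hq : Measurable q := AntitoneOn.measurable_indicator
    (fun x hx y hy hxy => ENNReal.ofReal_le_ofReal (hp_dec x y hx.1 hxy hy.2)) hS
  have hq_nonpos : ∀ t ≤ 0, q t = 0 := fun t ht => indicator_of_notMem (fun h => ht.not_gt h.1) _
  have := sigmaFinite_restrict_Ioi_of_lintegral_min_sq_one_lt_top hσfin
  calc ∫⁻ t in S, ENNReal.ofReal (p t) * σ (Ioi (s / t))
      = ∫⁻ t, q t * σ.restrict (Ioi 0) (Ioi (s / t)) := by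
        rw [← lintegral_indicator hS]
        refine lintegral_congr fun t => ?_
        by_cases ht : t ∈ S
        · simp only [q, indicator_of_mem ht, Measure.restrict_apply measurableSet_Ioi,
            inter_eq_left.2 (Ioi_subset_Ioi (div_pos hs ht.1).le)]
        · simp only [q, indicator_of_notMem ht, zero_mul]
    _ = ∫⁻ u in Ioi s, ∫⁻ r, q (u / r) * ENNReal.ofReal r⁻¹ ∂σ.restrict (Ioi 0) :=
        lintegral_mul_measure_Ioi_div hq hq_nonpos hs.le
    _ = ∫⁻ u in Ioi s, radialDensity t₀ p σ u :=
        setLIntegral_congr_fun measurableSet_Ioi fun u hu =>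
          (radialDensity_eq_lintegral ht₀.ne' p σ (hs.trans hu)).symm

/-- The radial computation: for a decreasing kernel `p` on `(0,t₀)` with
`∫₀^{t₀} (1+u²)p(u) du < ∞` and a radial Lévy measure `σ` on `(0,∞)`, the function
`ℓ̃(u) = ∫_{(u/t₀,∞)} p(u/r) r⁻¹ σ(dr)` is decreasing on `(0,∞)` and
`∫₀^{t₀} p(t) σ((s/t,∞)) dt = ∫_s^∞ ℓ̃(u) du` for every `s > 0`. -/
theorem stmt_8 (t₀ : ℝ≥0∞) (ht₀ : 0 < t₀)
    (p : ℝ → ℝ)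
    (hp_pos : ∀ u : ℝ, 0 < u → ENNReal.ofReal u < t₀ → 0 < p u)
    (hp_dec : ∀ u v : ℝ, 0 < u → u ≤ v → ENNReal.ofReal v < t₀ → p v ≤ p u)
    (hp_int : ∫⁻ u in {u : ℝ | 0 < u ∧ ENNReal.ofReal u < t₀},
        ENNReal.ofReal ((1 + u ^ 2) * p u) < ⊤)
    (σ : Measure ℝ) (hσsupp : σ (Set.Ioi (0 : ℝ))ᶜ = 0)
    (hσfin : ∫⁻ r, ENNReal.ofReal (min (r ^ 2) 1) ∂σ < ⊤)
    (ℓ : ℝ → ℝ≥0∞)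
    (hℓ : ∀ u : ℝ, ℓ u = ∫⁻ r in Set.Ioi ((ENNReal.ofReal u / t₀).toReal),
        ENNReal.ofReal (p (u / r) * r⁻¹) ∂σ) :
    (∀ u v : ℝ, 0 < u → u ≤ v → ℓ v ≤ ℓ u) ∧
    (∀ s : ℝ, 0 < s →
      ∫⁻ t in {t : ℝ | 0 < t ∧ ENNReal.ofReal t < t₀},
          ENNReal.ofReal (p t) * σ (Set.Ioi (s / t)) =
        ∫⁻ u in Set.Ioi s, ℓ u) :=
  stmt_8_general t₀ ht₀ p hp_dec σ hσfin ℓ hℓ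
end

section
/- Let ν be a σ-finite Borel measure on ℝ^d with ν({0}) = 0, and define the measure ν̃ on ℝ^d ∖ {0} by ν̃(B) = ∫₀^∞ ν({y : e^{-s} y ∈ B}) ds. Then for every integer m ≥ 0, ∫_{{|x| > 1}} (log |x|)^m ν̃(dx) = (m+1)^{-1} ∫_{{|y| > 1}} (log |y|)^{m+1} ν(dy), where both sides may be infinite simultaneously. -/
/-!
Away from the origin, `ν̃` is the image of `Leb|(0,∞) ⊗ ν` under `(s, y) ↦ e^{-s} y`. Since
`log ‖e^{-s} y‖ = log ‖y‖ - s`, Tonelli reduces the identity to the one-dimensional computation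
`∫₀^∞ ((L - s)₊)^m ds = (L₊)^{m+1} / (m + 1)`.
-/

open MeasureTheory Set
open scoped ENNReal

noncomputable section

/-- `t ↦ (t₊)^m`, vanishing on `t ≤ 0` also for `m = 0`. -/
def truncPow (m : ℕ) : ℝ → ℝ≥0∞ :=
  (Ioi 0).indicator fun t => ENNReal.ofReal (t ^ m)

@[fun_prop]
lemma measurable_truncPow (m : ℕ) : Measurable (truncPow m) :=
  ((measurable_id.pow_const m).ennreal_ofReal).indicator measurableSet_Ioi

lemma lintegral_Ioo_sub_pow {L : ℝ} (hL : 0 ≤ L) (m : ℕ) :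
    ∫⁻ s in Ioo 0 L, ENNReal.ofReal ((L - s) ^ m) = ENNReal.ofReal (L ^ (m + 1) / (m + 1)) := by
  have hint : IntegrableOn (fun s : ℝ => (L - s) ^ m) (Ioo 0 L) :=
    (by fun_prop : Continuous fun s : ℝ => (L - s) ^ m).integrableOn_Icc.mono_set
      Ioo_subset_Icc_self
  rw [← ofReal_integral_eq_lintegral_ofReal hint, ← integral_Ioc_eq_integral_Ioo,
    ← intervalIntegral.integral_of_le hL, intervalIntegral.integral_comp_sub_left (· ^ m) L]
  · simp [integral_pow]
  · filter_upwards [ae_restrict_mem measurableSet_Ioo] with s hs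
    exact pow_nonneg (sub_nonneg.2 hs.2.le) m

lemma lintegral_Ioi_truncPow_sub (L : ℝ) (m : ℕ) :
    ∫⁻ s in Ioi 0, truncPow m (L - s) = ((m : ℝ≥0∞) + 1)⁻¹ * truncPow (m + 1) L := by
  rcases le_or_gt L 0 with hL | hL
  · have hzero : ∀ s ∈ Ioi (0 : ℝ), truncPow m (L - s) = 0 := fun s hs =>
      indicator_of_notMem (by simp only [mem_Ioi, not_lt]; linarith [mem_Ioi.1 hs]) _
    rw [setLIntegral_congr_fun measurableSet_Ioi hzero, lintegral_zero]
    simp [truncPow, hL.not_gt]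
  · have hIoo : ∀ s ∈ Ioi (0 : ℝ),
        truncPow m (L - s) = (Iio L).indicator (fun s => ENNReal.ofReal ((L - s) ^ m)) s :=
      fun s _ => by simp [truncPow, indicator, sub_pos]
    rw [setLIntegral_congr_fun measurableSet_Ioi hIoo, lintegral_indicator measurableSet_Iio,
      Measure.restrict_restrict measurableSet_Iio, Iio_inter_Ioi, lintegral_Ioo_sub_pow hL.le,
      truncPow, indicator_of_mem (mem_Ioi.2 hL), ENNReal.ofReal_div_of_pos (by positivity),
      ENNReal.div_eq_inv_mul]
    congr
    exact_mod_cast ENNReal.ofReal_natCast (m + 1)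

section

variable {E : Type*} [NormedAddCommGroup E]

lemma indicator_one_lt_norm_log_pow (m : ℕ) :
    {x : E | 1 < ‖x‖}.indicator (fun x => ENNReal.ofReal (Real.log ‖x‖ ^ m)) =
      fun x => truncPow m (Real.log ‖x‖) := by
  ext x
  simp [truncPow, indicator, Real.log_pos_iff (norm_nonneg x)]

lemma truncPow_log_norm_exp_smul [NormedSpace ℝ E] (m : ℕ) (y : E) {s : ℝ} (hs : 0 ≤ s) :
    truncPow m (Real.log ‖Real.exp (-s) • y‖) = truncPow m (Real.log ‖y‖ - s) := by
  rcases eq_or_ne y 0 with rfl | hy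
  · simp [truncPow, indicator, hs]
  · rw [norm_smul, Real.norm_of_nonneg (Real.exp_pos _).le,
      Real.log_mul (Real.exp_pos _).ne' (norm_ne_zero_iff.2 hy), Real.log_exp, neg_add_eq_sub]

variable [MeasurableSpace E] [BorelSpace E]

lemma setLIntegral_one_lt_norm_log_pow (μ : Measure E) (m : ℕ) :
    ∫⁻ x in {x : E | 1 < ‖x‖}, ENNReal.ofReal (Real.log ‖x‖ ^ m) ∂μ =
      ∫⁻ x, truncPow m (Real.log ‖x‖) ∂μ := by
  rw [← lintegral_indicator (measurableSet_lt measurable_const measurable_norm),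
    indicator_one_lt_norm_log_pow]

variable [NormedSpace ℝ E]

/-- The measure `ν̃` of the statement, up to its mass at the origin. -/
def scaleMixture (ν : Measure E) : Measure E :=
  ((volume.restrict (Ioi (0 : ℝ))).prod ν).map fun p => Real.exp (-p.1) • p.2

lemma measurable_exp_neg_smul : Measurable fun p : ℝ × E => Real.exp (-p.1) • p.2 := by
  fun_prop

variable (ν : Measure E) [SFinite ν]

lemma scaleMixture_apply {B : Set E} (hB : MeasurableSet B) :
    scaleMixture ν B = ∫⁻ s in Ioi 0, ν {y | Real.exp (-s) • y ∈ B} := by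
  rw [scaleMixture, Measure.map_apply measurable_exp_neg_smul hB,
    Measure.prod_apply (measurable_exp_neg_smul hB)]
  rfl

lemma lintegral_scaleMixture {f : E → ℝ≥0∞} (hf : Measurable f) :
    ∫⁻ x, f x ∂scaleMixture ν = ∫⁻ y, (∫⁻ s in Ioi 0, f (Real.exp (-s) • y)) ∂ν := by
  rw [scaleMixture, lintegral_map hf measurable_exp_neg_smul]
  exact lintegral_prod_symm' _ (hf.comp measurable_exp_neg_smul)

lemma restrict_eq_restrict_scaleMixture {νt : Measure E}
    (hνt : ∀ B : Set E, MeasurableSet B → B ⊆ {0}ᶜ →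
      νt B = ∫⁻ s in Ioi (0 : ℝ), ν {y | Real.exp (-s) • y ∈ B})
    {S : Set E} (hS : MeasurableSet S) (hS0 : S ⊆ {0}ᶜ) :
    νt.restrict S = (scaleMixture ν).restrict S := by
  ext B hB
  rw [Measure.restrict_apply hB, Measure.restrict_apply hB,
    hνt _ (hB.inter hS) (inter_subset_right.trans hS0), scaleMixture_apply ν (hB.inter hS)]

end

end

theorem stmt_10_general (d : ℕ)
    (ν : Measure (EuclideanSpace ℝ (Fin d))) [SigmaFinite ν]
    (νt : Measure (EuclideanSpace ℝ (Fin d)))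
    (hνt : ∀ B : Set (EuclideanSpace ℝ (Fin d)), MeasurableSet B → B ⊆ {0}ᶜ →
      νt B = ∫⁻ s in Set.Ioi (0 : ℝ), ν {y | Real.exp (-s) • y ∈ B})
    (m : ℕ) :
    ∫⁻ x in {x : EuclideanSpace ℝ (Fin d) | 1 < ‖x‖},
        ENNReal.ofReal (Real.log ‖x‖ ^ m) ∂νt =
      ((m : ℝ≥0∞) + 1)⁻¹ *
        ∫⁻ y in {y : EuclideanSpace ℝ (Fin d) | 1 < ‖y‖},
          ENNReal.ofReal (Real.log ‖y‖ ^ (m + 1)) ∂ν := by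
  have hS0 : {x : EuclideanSpace ℝ (Fin d) | 1 < ‖x‖} ⊆ {0}ᶜ := fun x hx (h0 : x = 0) => by
    norm_num [h0] at hx
  rw [restrict_eq_restrict_scaleMixture ν hνt
      (measurableSet_lt measurable_const measurable_norm) hS0,
    setLIntegral_one_lt_norm_log_pow, setLIntegral_one_lt_norm_log_pow,
    lintegral_scaleMixture ν (by fun_prop), ← lintegral_const_mul _ (by fun_prop)]
  refine lintegral_congr fun y => ?_
  rw [← lintegral_Ioi_truncPow_sub]
  exact setLIntegral_congr_fun measurableSet_Ioi fun s hs =>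
    truncPow_log_norm_exp_smul m y (le_of_lt hs)

/-- If `ν̃(B) = ∫₀^∞ ν({y : e^{-s}y ∈ B}) ds` on `ℝ^d ∖ {0}`, then for every `m ≥ 0`,
`∫_{|x|>1} (log|x|)^m ν̃(dx) = (m+1)⁻¹ ∫_{|y|>1} (log|y|)^{m+1} ν(dy)`
(both sides possibly infinite simultaneously). -/
theorem stmt_10 (d : ℕ) (hd : 1 ≤ d)
    (ν : Measure (EuclideanSpace ℝ (Fin d))) [SigmaFinite ν]
    (hν0 : ν {0} = 0)
    (νt : Measure (EuclideanSpace ℝ (Fin d)))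
    (hνt : ∀ B : Set (EuclideanSpace ℝ (Fin d)), MeasurableSet B → B ⊆ {0}ᶜ →
      νt B = ∫⁻ s in Set.Ioi (0 : ℝ), ν {y | Real.exp (-s) • y ∈ B})
    (m : ℕ) :
    ∫⁻ x in {x : EuclideanSpace ℝ (Fin d) | 1 < ‖x‖},
        ENNReal.ofReal (Real.log ‖x‖ ^ m) ∂νt =
      ((m : ℝ≥0∞) + 1)⁻¹ *
        ∫⁻ y in {y : EuclideanSpace ℝ (Fin d) | 1 < ‖y‖},
          ENNReal.ofReal (Real.log ‖y‖ ^ (m + 1)) ∂ν :=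
  stmt_10_general d ν νt hνt m
end

section
/- Let ν be a Lévy measure on ℝ^d and define the measure ν̃ on ℝ^d ∖ {0} by ν̃(B) = ∫₀^∞ e^{-s} ν({y : s y ∈ B}) ds. Then for every integer m ≥ 0, ∫_{{|y| > 1}} (log |y|)^m ν(dy) < ∞ if and only if ∫_{{|x| > 1}} (log |x|)^m ν̃(dx) < ∞. -/
/-!
Writing `ν̃` as the image of `e^{-s} ds ⊗ ν` under `(s, y) ↦ s • y`, Tonelli turns the log-moment
of `ν̃` into `∫ Φ dν`, where `Φ(y) = ∫₀^∞ e^{-s} (log⁺ ‖s y‖)^m ds`. Since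
`log ‖s y‖ ≤ s + log ‖y‖`, and `s ‖y‖ > 1` forces `1 < (s ‖y‖)²`, the Gamma integrals bound `Φ` by
a multiple of `min (‖y‖², 1) + (log⁺ ‖y‖)^m`; restricting to `s ∈ (1, 2]` bounds it below by
`e^{-2} (log⁺ ‖y‖)^m`.
-/

open MeasureTheory Real Set ENNReal

theorem setLIntegral_eq_lintegral_lintegral_smul {E : Type*} [MeasurableSpace E] [SMul ℝ E]
    [MeasurableSMul₂ ℝ E] {ν νt : Measure E} [SFinite ν] {ρ : Measure ℝ} [SFinite ρ]
    {w : ℝ → ℝ≥0∞} (hw : Measurable w) {S : Set E} (hS : MeasurableSet S)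
    (h : ∀ B, MeasurableSet B → B ⊆ S → νt B = ∫⁻ s, w s * ν {y | s • y ∈ B} ∂ρ)
    {f : E → ℝ≥0∞} (hf : Measurable f) :
    ∫⁻ x in S, f x ∂νt = ∫⁻ y, ∫⁻ s, w s * S.indicator f (s • y) ∂ρ ∂ν := by
  have hsmul : Measurable fun p : ℝ × E => p.1 • p.2 := measurable_smul
  have hfS : Measurable (S.indicator f) := hf.indicator hS
  have hrestrict : νt.restrict S =
      (((ρ.withDensity w).prod ν).map fun p => p.1 • p.2).restrict S := by
    refine (Measure.restrict_congr_meas hS).2 fun B hBS hB => ?_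
    rw [h B hB hBS, Measure.map_apply hsmul hB, Measure.prod_apply (hsmul hB),
      lintegral_withDensity_eq_lintegral_mul _ hw (measurable_measure_prodMk_left (hsmul hB))]
    rfl
  rw [hrestrict, ← lintegral_indicator hS, lintegral_map hfS hsmul,
    lintegral_prod_symm' (fun p : ℝ × E => S.indicator f (p.1 • p.2)) (hfS.comp hsmul)]
  exact lintegral_congr fun y =>
    lintegral_withDensity_eq_lintegral_mul _ hw (hfS.comp (measurable_id.smul_const y))

section LevyMeasure

variable {E : Type*} [NormedAddCommGroup E] [MeasurableSpace E] [OpensMeasurableSpace E]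
  {ν : Measure E}

theorem measure_lt_norm_lt_top (hν : ∫⁻ x, ENNReal.ofReal (min (‖x‖ ^ 2) 1) ∂ν < ∞) {ε : ℝ}
    (hε : 0 < ε) : ν {x | ε < ‖x‖} < ∞ := by
  have hpos : ENNReal.ofReal (min (ε ^ 2) 1) ≠ 0 := by positivity
  refine ENNReal.lt_top_of_mul_ne_top_right (ne_top_of_le_ne_top hν.ne ?_) hpos
  refine le_trans ?_ (mul_meas_ge_le_lintegral₀ (by fun_prop) (ENNReal.ofReal (min (ε ^ 2) 1)))
  refine mul_le_mul' le_rfl (measure_mono fun x (hx : ε < ‖x‖) => ?_)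
  exact ENNReal.ofReal_le_ofReal (min_le_min_right _ (pow_le_pow_left₀ hε.le hx.le 2))

theorem sigmaFinite_of_lintegral_min_sq_lt_top (h0 : ν {0} = 0)
    (hν : ∫⁻ x, ENNReal.ofReal (min (‖x‖ ^ 2) 1) ∂ν < ∞) : SigmaFinite ν := by
  refine Measure.sigmaFinite_of_countable
    (S := insert {0} (range fun n : ℕ => {x : E | 1 / (n + 1 : ℝ) < ‖x‖}))
    ((countable_range _).insert _) ?_ (eq_univ_of_forall fun x => ?_)
  · rintro _ (rfl | ⟨n, rfl⟩)
    · simp [h0]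
    · exact measure_lt_norm_lt_top hν (by positivity)
  · rcases eq_or_ne x 0 with rfl | hx
    · exact ⟨{0}, mem_insert _ _, rfl⟩
    · obtain ⟨n, hn⟩ := exists_nat_one_div_lt (norm_pos_iff.2 hx)
      exact ⟨_, mem_insert_of_mem _ ⟨n, rfl⟩, hn⟩

end LevyMeasure

theorem lintegral_exp_neg_mul_pow_lt_top (k : ℕ) :
    ∫⁻ s in Ioi 0, ENNReal.ofReal (exp (-s) * s ^ k) < ∞ := by
  have h := Real.GammaIntegral_convergent (s := k + 1) (by positivity)
  simp only [add_sub_cancel_right, Real.rpow_natCast] at h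
  exact h.lintegral_lt_top

section LogMoment

variable {E : Type*} [NormedAddCommGroup E]

noncomputable def logPowOutside (m : ℕ) : E → ℝ≥0∞ :=
  {x | 1 < ‖x‖}.indicator fun x => ENNReal.ofReal (log ‖x‖ ^ m)

variable {m : ℕ}

theorem logPowOutside_mono {x x' : E} (h : ‖x‖ ≤ ‖x'‖) :
    logPowOutside m x ≤ logPowOutside m x' := by
  by_cases hx : 1 < ‖x‖
  · have hx' : 1 < ‖x'‖ := hx.trans_le h
    simp only [logPowOutside, indicator_of_mem (show x ∈ {x : E | 1 < ‖x‖} from hx),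
      indicator_of_mem (show x' ∈ {x : E | 1 < ‖x‖} from hx')]
    exact ENNReal.ofReal_le_ofReal
      (pow_le_pow_left₀ (log_nonneg hx.le) (log_le_log (by linarith) h) m)
  · simp [logPowOutside, hx]

variable [NormedSpace ℝ E]

noncomputable def upsilonLogPowOutside (m : ℕ) (y : E) : ℝ≥0∞ :=
  ∫⁻ s in Ioi 0, ENNReal.ofReal (exp (-s)) * logPowOutside m (s • y)

theorem ofReal_exp_neg_two_mul_logPowOutside_le (y : E) :
    ENNReal.ofReal (exp (-2)) * logPowOutside m y ≤ upsilonLogPowOutside m y := by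
  calc ENNReal.ofReal (exp (-2)) * logPowOutside m y
      = ∫⁻ _ in Ioc (1 : ℝ) 2, ENNReal.ofReal (exp (-2)) * logPowOutside m y := by
        rw [setLIntegral_const, Real.volume_Ioc]
        norm_num
    _ ≤ ∫⁻ s in Ioc 1 2, ENNReal.ofReal (exp (-s)) * logPowOutside m (s • y) := by
        refine setLIntegral_mono' measurableSet_Ioc fun s ⟨hs1, hs2⟩ => ?_
        refine mul_le_mul' (ENNReal.ofReal_le_ofReal (exp_le_exp.2 (by linarith)))
          (logPowOutside_mono ?_)
        rw [norm_smul_of_nonneg (by linarith)]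
        exact le_mul_of_one_le_left (norm_nonneg y) hs1.le
    _ ≤ upsilonLogPowOutside m y := lintegral_mono_set fun s hs => lt_trans one_pos hs.1

theorem upsilonLogPowOutside_le_of_forall {y : E} {φ : ℝ → ℝ≥0∞}
    (h : ∀ s, 0 < s → 1 < s * ‖y‖ → ENNReal.ofReal (exp (-s) * log (s * ‖y‖) ^ m) ≤ φ s) :
    upsilonLogPowOutside m y ≤ ∫⁻ s in Ioi 0, φ s := by
  refine setLIntegral_mono' measurableSet_Ioi fun s (hs : 0 < s) => ?_
  have hnorm : ‖s • y‖ = s * ‖y‖ := norm_smul_of_nonneg hs.le y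
  by_cases hsy : 1 < s * ‖y‖
  · rw [logPowOutside, indicator_of_mem (show s • y ∈ {x : E | 1 < ‖x‖} by simpa [hnorm]),
      ← ENNReal.ofReal_mul (exp_pos _).le, hnorm]
    exact h s hs hsy
  · have hsy' : s • y ∉ {x : E | 1 < ‖x‖} := fun h => hsy (by simpa [hnorm] using h)
    simp [logPowOutside, indicator_of_notMem hsy']

theorem upsilonLogPowOutside_le_of_norm_le_one {y : E} (hy : ‖y‖ ≤ 1) :
    upsilonLogPowOutside m y ≤
      (∫⁻ s in Ioi 0, ENNReal.ofReal (exp (-s) * s ^ (m + 2))) * ENNReal.ofReal (‖y‖ ^ 2) := by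
  rw [← lintegral_mul_const' _ _ ofReal_ne_top]
  refine upsilonLogPowOutside_le_of_forall fun s hs hsy => ?_
  have hlog : log (s * ‖y‖) ≤ s :=
    (log_le_self (by positivity)).trans (mul_le_of_le_one_right hs.le hy)
  have hpow : log (s * ‖y‖) ^ m ≤ s ^ m * (s * ‖y‖) ^ 2 :=
    (pow_le_pow_left₀ (log_nonneg hsy.le) hlog m).trans
      (le_mul_of_one_le_right (pow_nonneg hs.le m) (one_le_pow₀ hsy.le))
  rw [← ENNReal.ofReal_mul (mul_nonneg (exp_pos _).le (pow_nonneg hs.le _))]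
  refine ENNReal.ofReal_le_ofReal ?_
  calc exp (-s) * log (s * ‖y‖) ^ m ≤ exp (-s) * (s ^ m * (s * ‖y‖) ^ 2) :=
        mul_le_mul_of_nonneg_left hpow (exp_pos _).le
    _ = exp (-s) * s ^ (m + 2) * ‖y‖ ^ 2 := by ring

theorem upsilonLogPowOutside_le_of_one_lt_norm {y : E} (hy : 1 < ‖y‖) :
    upsilonLogPowOutside m y ≤ ENNReal.ofReal (2 ^ (m - 1)) *
      ((∫⁻ s in Ioi 0, ENNReal.ofReal (exp (-s) * s ^ m)) +
        (∫⁻ s in Ioi 0, ENNReal.ofReal (exp (-s) * s ^ 0)) * logPowOutside m y) := by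
  have hL : 0 ≤ log ‖y‖ := log_nonneg hy.le
  rw [logPowOutside, indicator_of_mem (show y ∈ {x : E | 1 < ‖x‖} from hy),
    ← lintegral_mul_const' _ _ ofReal_ne_top, ← lintegral_add_left (by fun_prop),
    ← lintegral_const_mul' _ _ ofReal_ne_top]
  refine upsilonLogPowOutside_le_of_forall fun s hs hsy => ?_
  have hlog : log (s * ‖y‖) ≤ s + log ‖y‖ := by
    rw [log_mul hs.ne' (by linarith)]
    linarith [log_le_self hs.le]
  have hpow : log (s * ‖y‖) ^ m ≤ 2 ^ (m - 1) * (s ^ m + log ‖y‖ ^ m) :=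
    (pow_le_pow_left₀ (log_nonneg hsy.le) hlog m).trans (add_pow_le hs.le hL m)
  have hA : 0 ≤ exp (-s) * s ^ m := mul_nonneg (exp_pos _).le (pow_nonneg hs.le _)
  have hB : 0 ≤ exp (-s) * s ^ 0 := by positivity
  rw [← ENNReal.ofReal_mul hB, ← ENNReal.ofReal_add hA (mul_nonneg hB (pow_nonneg hL _)),
    ← ENNReal.ofReal_mul (by positivity)]
  refine ENNReal.ofReal_le_ofReal ?_
  calc exp (-s) * log (s * ‖y‖) ^ m ≤ exp (-s) * (2 ^ (m - 1) * (s ^ m + log ‖y‖ ^ m)) :=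
        mul_le_mul_of_nonneg_left hpow (exp_pos _).le
    _ = 2 ^ (m - 1) * (exp (-s) * s ^ m + exp (-s) * s ^ 0 * log ‖y‖ ^ m) := by ring

theorem exists_upsilonLogPowOutside_le (m : ℕ) :
    ∃ C < ∞, ∀ y : E,
      upsilonLogPowOutside m y ≤ C * (ENNReal.ofReal (min (‖y‖ ^ 2) 1) + logPowOutside m y) := by
  set Γ : ℕ → ℝ≥0∞ := fun k => ∫⁻ s in Ioi 0, ENNReal.ofReal (exp (-s) * s ^ k)
  have hΓ k : Γ k < ∞ := lintegral_exp_neg_mul_pow_lt_top k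
  refine ⟨Γ (m + 2) + ENNReal.ofReal (2 ^ (m - 1)) * max (Γ m) (Γ 0),
    add_lt_top.2 ⟨hΓ _, mul_lt_top ofReal_lt_top (max_lt (hΓ _) (hΓ _))⟩, fun y => ?_⟩
  rcases le_or_gt ‖y‖ 1 with hy | hy
  · rw [min_eq_left (pow_le_one₀ (norm_nonneg y) hy)]
    calc upsilonLogPowOutside m y ≤ Γ (m + 2) * ENNReal.ofReal (‖y‖ ^ 2) :=
          upsilonLogPowOutside_le_of_norm_le_one hy
      _ ≤ _ := mul_le_mul' le_self_add le_self_add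
  · rw [min_eq_right (one_le_pow₀ hy.le), ENNReal.ofReal_one]
    calc upsilonLogPowOutside m y
        ≤ ENNReal.ofReal (2 ^ (m - 1)) * (Γ m + Γ 0 * logPowOutside m y) :=
          upsilonLogPowOutside_le_of_one_lt_norm hy
      _ ≤ ENNReal.ofReal (2 ^ (m - 1)) * (max (Γ m) (Γ 0) * (1 + logPowOutside m y)) := by
          rw [mul_add (max _ _), mul_one]
          gcongr
          exacts [le_max_left _ _, le_max_right _ _]
      _ ≤ _ := by
          rw [← mul_assoc]
          gcongr
          exact le_add_self

end LogMoment

theorem stmt_11_general (d : ℕ)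
    (ν : Measure (EuclideanSpace ℝ (Fin d)))
    (hν0 : ν {0} = 0)
    (hνfin : ∫⁻ x, ENNReal.ofReal (min (‖x‖ ^ 2) 1) ∂ν < ⊤)
    (νt : Measure (EuclideanSpace ℝ (Fin d)))
    (hνt : ∀ B : Set (EuclideanSpace ℝ (Fin d)), MeasurableSet B → B ⊆ {0}ᶜ →
      νt B = ∫⁻ s in Set.Ioi (0 : ℝ), ENNReal.ofReal (Real.exp (-s)) * ν {y | s • y ∈ B})
    (m : ℕ) :
    ∫⁻ y in {y : EuclideanSpace ℝ (Fin d) | 1 < ‖y‖},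
        ENNReal.ofReal (Real.log ‖y‖ ^ m) ∂ν < ⊤ ↔
      ∫⁻ x in {x : EuclideanSpace ℝ (Fin d) | 1 < ‖x‖},
        ENNReal.ofReal (Real.log ‖x‖ ^ m) ∂νt < ⊤ := by
  have := sigmaFinite_of_lintegral_min_sq_lt_top hν0 hνfin
  have hU : MeasurableSet {x : EuclideanSpace ℝ (Fin d) | 1 < ‖x‖} :=
    measurableSet_lt measurable_const measurable_norm
  have hU0 : {x : EuclideanSpace ℝ (Fin d) | 1 < ‖x‖} ⊆ {0}ᶜ :=
    fun x (hx : 1 < ‖x‖) (h0 : x = 0) => by norm_num [h0] at hx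
  rw [setLIntegral_eq_lintegral_lintegral_smul (by fun_prop) hU
      (fun B hB hBU => hνt B hB (hBU.trans hU0)) (by fun_prop),
    ← lintegral_indicator hU]
  change ∫⁻ y, logPowOutside m y ∂ν < ⊤ ↔ ∫⁻ y, upsilonLogPowOutside m y ∂ν < ⊤
  obtain ⟨C, hC, hupper⟩ := exists_upsilonLogPowOutside_le (E := EuclideanSpace ℝ (Fin d)) m
  constructor
  · intro hlog
    calc ∫⁻ y, upsilonLogPowOutside m y ∂ν
        ≤ C * (∫⁻ y, ENNReal.ofReal (min (‖y‖ ^ 2) 1) ∂ν + ∫⁻ y, logPowOutside m y ∂ν) := by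
          rw [← lintegral_add_left (by fun_prop), ← lintegral_const_mul' _ _ hC.ne]
          exact lintegral_mono hupper
      _ < ⊤ := mul_lt_top hC (add_lt_top.2 ⟨hνfin, hlog⟩)
  · intro hupsilon
    have hlower : ENNReal.ofReal (exp (-2)) * ∫⁻ y, logPowOutside m y ∂ν ≤
        ∫⁻ y, upsilonLogPowOutside m y ∂ν := by
      rw [← lintegral_const_mul' _ _ ofReal_ne_top]
      exact lintegral_mono ofReal_exp_neg_two_mul_logPowOutside_le
    exact ENNReal.lt_top_of_mul_ne_top_right (hlower.trans_lt hupsilon).ne (by positivity)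

/-- If `ν` is a Lévy measure and `ν̃(B) = ∫₀^∞ e^{-s} ν({y : sy ∈ B}) ds` on `ℝ^d ∖ {0}`,
then for every `m ≥ 0`, `∫_{|y|>1} (log|y|)^m ν(dy) < ∞` iff
`∫_{|x|>1} (log|x|)^m ν̃(dx) < ∞`. -/
theorem stmt_11 (d : ℕ) (hd : 1 ≤ d)
    (ν : Measure (EuclideanSpace ℝ (Fin d)))
    (hν0 : ν {0} = 0)
    (hνfin : ∫⁻ x, ENNReal.ofReal (min (‖x‖ ^ 2) 1) ∂ν < ⊤)
    (νt : Measure (EuclideanSpace ℝ (Fin d)))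
    (hνt : ∀ B : Set (EuclideanSpace ℝ (Fin d)), MeasurableSet B → B ⊆ {0}ᶜ →
      νt B = ∫⁻ s in Set.Ioi (0 : ℝ), ENNReal.ofReal (Real.exp (-s)) * ν {y | s • y ∈ B})
    (m : ℕ) :
    ∫⁻ y in {y : EuclideanSpace ℝ (Fin d) | 1 < ‖y‖},
        ENNReal.ofReal (Real.log ‖y‖ ^ m) ∂ν < ⊤ ↔
      ∫⁻ x in {x : EuclideanSpace ℝ (Fin d) | 1 < ‖x‖},
        ENNReal.ofReal (Real.log ‖x‖ ^ m) ∂νt < ⊤ :=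
  stmt_11_general d ν hν0 hνfin νt hνt m
end

section
/- Let σ be a Borel measure on (0,∞) with ∫₀^∞ (r² ∧ 1) σ(dr) < ∞. Define ℓ(s) = ∫_{(s,∞)} r^{-1} σ(dr) for s > 0 and h(u) = e^{-u} ∫_{e^u}^∞ ℓ(s) ds for u ∈ ℝ. Then h is finite and absolutely continuous on ℝ, and for all u₁ ≤ u₂, h(u₁) − h(u₂) = ∫_{u₁}^{u₂} e^{-u} σ((e^u, ∞)) du; in particular, for a.e. u ∈ ℝ, −h'(u) = e^{-u} σ((e^u, ∞)). -/
open MeasureTheory Set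
open scoped ENNReal

/-! Both `e^{-u} ∫_{e^u}^∞ ℓ(s) ds` and `∫_u^∞ e^{-v} σ((e^v,∞)) dv` equal, by Tonelli,
`∫_{(e^u,∞)} (e^{-u} - r⁻¹) σ(dr)`, which is at most `e^{-u} σ((e^u,∞)) < ∞`. So `h` is the
tail integral of the antitone function `g(v) = e^{-v} σ((e^v,∞))`, and `h' = -g` at every
continuity point of `g`, i.e. off a countable set. -/

lemma measure_Ioi_ne_top_of_lintegral_min_sq_one_lt_top {σ : Measure ℝ}
    (hσ : ∫⁻ r, ENNReal.ofReal (min (r ^ 2) 1) ∂σ < ∞) {t : ℝ} (ht : 0 < t) :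
    σ (Ioi t) ≠ ∞ := by
  set ε := ENNReal.ofReal (min (t ^ 2) 1)
  have hε : ε ≠ 0 := by simp [ε, ht.ne']
  have hsub : Ioi t ⊆ {r | ε ≤ ENNReal.ofReal (min (r ^ 2) 1)} := fun r (hr : t < r) =>
    ENNReal.ofReal_le_ofReal (min_le_min_right _ (pow_le_pow_left₀ ht.le hr.le 2))
  have hmarkov : ε * σ (Ioi t) ≤ ∫⁻ r, ENNReal.ofReal (min (r ^ 2) 1) ∂σ :=
    (by gcongr : ε * σ (Ioi t) ≤ _).trans (mul_meas_ge_le_lintegral₀ (by fun_prop) ε)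
  exact (ENNReal.lt_top_of_mul_ne_top_right (hmarkov.trans_lt hσ).ne hε).ne

lemma lintegral_Ioc_exp_neg (a b : ℝ) :
    ∫⁻ v in Ioc a b, ENNReal.ofReal (Real.exp (-v)) =
      ENNReal.ofReal (Real.exp (-a) - Real.exp (-b)) := by
  rcases le_or_gt a b with hab | hba
  · rw [← ofReal_integral_eq_lintegral_ofReal
      (by fun_prop : Continuous fun v => Real.exp (-v)).integrableOn_Ioc
      (Filter.Eventually.of_forall fun v => (Real.exp_pos _).le),
      ← intervalIntegral.integral_of_le hab, intervalIntegral.integral_comp_neg fun v => Real.exp v,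
      integral_exp]
  · rw [Ioc_eq_empty (not_lt.mpr hba.le), Measure.restrict_empty, lintegral_zero_measure,
      eq_comm, ENNReal.ofReal_eq_zero, sub_nonpos, Real.exp_le_exp, neg_le_neg_iff]
    exact hba.le

lemma lintegral_Ioi_lintegral_Ioi (σ : Measure ℝ) (t : ℝ) [SFinite (σ.restrict (Ioi t))]
    {f : ℝ → ℝ≥0∞} (hf : Measurable f) :
    ∫⁻ s in Ioi t, ∫⁻ r in Ioi s, f r ∂σ = ∫⁻ r in Ioi t, ENNReal.ofReal (r - t) * f r ∂σ := by
  set F : ℝ → ℝ → ℝ≥0∞ := fun s r => (Ioi s).indicator f r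
  have hF : Measurable (Function.uncurry F) :=
    (hf.comp measurable_snd).indicator (measurableSet_lt measurable_fst measurable_snd)
  have h_outer : EqOn (fun s => ∫⁻ r in Ioi s, f r ∂σ) (fun s => ∫⁻ r in Ioi t, F s r ∂σ)
      (Ioi t) := fun s (hs : t < s) => by
    change _ = ∫⁻ r in Ioi t, (Ioi s).indicator f r ∂σ
    rw [lintegral_indicator measurableSet_Ioi, Measure.restrict_restrict measurableSet_Ioi,
      inter_eq_left.mpr (Ioi_subset_Ioi hs.le)]
  have h_inner : EqOn (fun r => ∫⁻ s in Ioi t, F s r) (fun r => ENNReal.ofReal (r - t) * f r)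
      (Ioi t) := fun r _ => by
    change ∫⁻ s in Ioi t, (Iio r).indicator (fun _ => f r) s = _
    rw [lintegral_indicator_const measurableSet_Iio, Measure.restrict_apply measurableSet_Iio,
      Iio_inter_Ioi, Real.volume_Ioo, mul_comm]
  rw [setLIntegral_congr_fun measurableSet_Ioi h_outer, lintegral_lintegral_swap hF.aemeasurable,
    setLIntegral_congr_fun measurableSet_Ioi h_inner]

lemma lintegral_Ioi_exp_neg_mul_measure_Ioi_exp (σ : Measure ℝ) (u : ℝ)
    [SFinite (σ.restrict (Ioi (Real.exp u)))] :
    ∫⁻ v in Ioi u, ENNReal.ofReal (Real.exp (-v)) * σ (Ioi (Real.exp v)) =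
      ∫⁻ r in Ioi (Real.exp u), ENNReal.ofReal (Real.exp (-u) - r⁻¹) ∂σ := by
  set F : ℝ → ℝ → ℝ≥0∞ := fun v r => (Ioi (Real.exp v)).indicator
    (fun _ => ENNReal.ofReal (Real.exp (-v))) r
  have hF : Measurable (Function.uncurry F) :=
    (by fun_prop : Measurable fun p : ℝ × ℝ => ENNReal.ofReal (Real.exp (-p.1))).indicator
      (measurableSet_lt (by fun_prop) measurable_snd)
  have h_outer : EqOn (fun v => ENNReal.ofReal (Real.exp (-v)) * σ (Ioi (Real.exp v)))
      (fun v => ∫⁻ r in Ioi (Real.exp u), F v r ∂σ) (Ioi u) := fun v (hv : u < v) => by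
    change _ = ∫⁻ r in Ioi (Real.exp u), (Ioi (Real.exp v)).indicator _ r ∂σ
    rw [lintegral_indicator_const measurableSet_Ioi, Measure.restrict_apply measurableSet_Ioi,
      inter_eq_left.mpr (Ioi_subset_Ioi (Real.exp_le_exp.mpr hv.le))]
  have h_inner : EqOn (fun r => ∫⁻ v in Ioi u, F v r)
      (fun r => ENNReal.ofReal (Real.exp (-u) - r⁻¹)) (Ioi (Real.exp u)) := fun r hr => by
    have hr0 : 0 < r := (Real.exp_pos u).trans hr
    have hF_r : (fun v => F v r) = (Iio (Real.log r)).indicator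
        (fun v => ENNReal.ofReal (Real.exp (-v))) := by
      ext v
      simp only [F, indicator, mem_Ioi, mem_Iio, Real.lt_log_iff_exp_lt hr0]
    simp only [hF_r]
    rw [lintegral_indicator measurableSet_Iio, Measure.restrict_restrict measurableSet_Iio,
      Iio_inter_Ioi, setLIntegral_congr Ioo_ae_eq_Ioc, lintegral_Ioc_exp_neg,
      Real.exp_neg (Real.log r), Real.exp_log hr0]
  rw [setLIntegral_congr_fun measurableSet_Ioi h_outer, lintegral_lintegral_swap hF.aemeasurable,
    setLIntegral_congr_fun measurableSet_Ioi h_inner]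

lemma exp_neg_mul_lintegral_Ioi_lintegral_Ioi_inv (σ : Measure ℝ) (u : ℝ)
    [SFinite (σ.restrict (Ioi (Real.exp u)))] :
    ENNReal.ofReal (Real.exp (-u)) *
        ∫⁻ s in Ioi (Real.exp u), ∫⁻ r in Ioi s, ENNReal.ofReal r⁻¹ ∂σ =
      ∫⁻ v in Ioi u, ENNReal.ofReal (Real.exp (-v)) * σ (Ioi (Real.exp v)) := by
  rw [lintegral_Ioi_lintegral_Ioi σ _ measurable_inv.ennreal_ofReal,
    lintegral_Ioi_exp_neg_mul_measure_Ioi_exp, ← lintegral_const_mul _ (by fun_prop)]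
  refine setLIntegral_congr_fun measurableSet_Ioi fun r (hr : Real.exp u < r) => ?_
  have hr0 : 0 < r := (Real.exp_pos u).trans hr
  rw [← ENNReal.ofReal_mul (sub_pos.mpr hr).le, ← ENNReal.ofReal_mul (Real.exp_pos _).le,
    Real.exp_neg]
  congr 1
  field_simp

lemma lintegral_Ioi_exp_neg_mul_measure_Ioi_exp_le (σ : Measure ℝ) (u : ℝ)
    [SFinite (σ.restrict (Ioi (Real.exp u)))] :
    ∫⁻ v in Ioi u, ENNReal.ofReal (Real.exp (-v)) * σ (Ioi (Real.exp v)) ≤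
      ENNReal.ofReal (Real.exp (-u)) * σ (Ioi (Real.exp u)) := by
  rw [lintegral_Ioi_exp_neg_mul_measure_Ioi_exp, ← setLIntegral_const]
  exact setLIntegral_mono' measurableSet_Ioi fun r (hr : Real.exp u < r) =>
    ENNReal.ofReal_le_ofReal (sub_le_self _ (inv_nonneg.mpr ((Real.exp_pos u).trans hr).le))

lemma measurable_ofReal_exp_neg_mul_measure_Ioi_exp (σ : Measure ℝ) :
    Measurable fun v => ENNReal.ofReal (Real.exp (-v)) * σ (Ioi (Real.exp v)) :=
  (by fun_prop : Measurable fun v : ℝ => ENNReal.ofReal (Real.exp (-v))).mul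
    (Antitone.measurable fun _ _ hab => measure_mono (Ioi_subset_Ioi (Real.exp_le_exp.mpr hab)))

lemma antitone_exp_neg_mul_toReal_measure_Ioi_exp {σ : Measure ℝ}
    (hσ : ∀ u, σ (Ioi (Real.exp u)) ≠ ∞) :
    Antitone fun v => Real.exp (-v) * (σ (Ioi (Real.exp v))).toReal := fun a _ hab =>
  mul_le_mul (Real.exp_le_exp.mpr (neg_le_neg hab))
    (ENNReal.toReal_mono (hσ a) (measure_mono (Ioi_subset_Ioi (Real.exp_le_exp.mpr hab))))
    ENNReal.toReal_nonneg (Real.exp_pos _).le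

lemma toReal_setLIntegral_Ioi_sub {w : ℝ → ℝ≥0∞} (hw : AEMeasurable w) {a b : ℝ} (hab : a ≤ b)
    (ha : ∫⁻ v in Ioi a, w v ≠ ∞) :
    (∫⁻ v in Ioi a, w v).toReal - (∫⁻ v in Ioi b, w v).toReal = ∫ v in Ioc a b, (w v).toReal := by
  rw [← Ioc_union_Ioi_eq_Ioi hab, lintegral_union measurableSet_Ioi Ioc_disjoint_Ioi_same] at ha ⊢
  obtain ⟨hIoc, hIoi⟩ := ENNReal.add_ne_top.mp ha
  rw [ENNReal.toReal_add hIoc hIoi, add_sub_cancel_right,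
    integral_toReal hw.restrict (ae_lt_top' hw.restrict hIoc)]

lemma ae_hasDerivAt_of_sub_eq_integral {f g : ℝ → ℝ} (hg : Antitone g)
    (hfg : ∀ a b, a ≤ b → f a - f b = ∫ x in Ioc a b, g x) :
    ∀ᵐ x, HasDerivAt f (-g x) x := by
  filter_upwards [hg.countable_not_continuousAt.ae_notMem volume] with x hx
  have hf : ∀ y, f y = f x - ∫ t in x..y, g t := fun y => by
    rcases le_total x y with hxy | hyx
    · rw [intervalIntegral.integral_of_le hxy, ← hfg x y hxy]; ring
    · rw [intervalIntegral.integral_of_ge hyx, ← hfg y x hyx]; ring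
  have hF := intervalIntegral.integral_hasDerivAt_right (hg.intervalIntegrable (a := x))
    hg.measurable.stronglyMeasurable.stronglyMeasurableAtFilter (not_not.mp hx)
  exact ((hasDerivAt_const x (f x)).sub hF |>.congr_of_eventuallyEq
    (Filter.Eventually.of_forall hf)).congr_deriv (zero_sub _)

theorem stmt_14_general (σ : Measure ℝ)
    (hσfin : ∫⁻ r, ENNReal.ofReal (min (r ^ 2) 1) ∂σ < ⊤)
    (ℓ : ℝ → ℝ≥0∞) (hℓ : ∀ s : ℝ, ℓ s = ∫⁻ r in Set.Ioi s, ENNReal.ofReal r⁻¹ ∂σ)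
    (h : ℝ → ℝ)
    (hh : ∀ u : ℝ, h u = Real.exp (-u) * (∫⁻ s in Set.Ioi (Real.exp u), ℓ s).toReal) :
    (∀ u : ℝ, ∫⁻ s in Set.Ioi (Real.exp u), ℓ s < ⊤) ∧
    (∀ u₁ u₂ : ℝ, u₁ ≤ u₂ →
      h u₁ - h u₂ =
        ∫ u in Set.Ioc u₁ u₂, Real.exp (-u) * (σ (Set.Ioi (Real.exp u))).toReal) ∧
    (∀ᵐ u : ℝ, HasDerivAt h (-(Real.exp (-u) * (σ (Set.Ioi (Real.exp u))).toReal)) u) := by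
  have hσ u : σ (Ioi (Real.exp u)) ≠ ∞ :=
    measure_Ioi_ne_top_of_lintegral_min_sq_one_lt_top hσfin (Real.exp_pos u)
  have (u : ℝ) : IsFiniteMeasure (σ.restrict (Ioi (Real.exp u))) :=
    isFiniteMeasure_restrict.mpr (hσ u)
  set w : ℝ → ℝ≥0∞ := fun v => ENNReal.ofReal (Real.exp (-v)) * σ (Ioi (Real.exp v))
  have hw v : (w v).toReal = Real.exp (-v) * (σ (Ioi (Real.exp v))).toReal := by
    rw [ENNReal.toReal_mul, ENNReal.toReal_ofReal (Real.exp_pos _).le]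
  have hH u : ENNReal.ofReal (Real.exp (-u)) * ∫⁻ s in Ioi (Real.exp u), ℓ s =
      ∫⁻ v in Ioi u, w v := by
    simp only [hℓ]
    exact exp_neg_mul_lintegral_Ioi_lintegral_Ioi_inv σ u
  have hH_ne_top u : ∫⁻ v in Ioi u, w v ≠ ∞ :=
    ((lintegral_Ioi_exp_neg_mul_measure_Ioi_exp_le σ u).trans_lt
      (ENNReal.mul_lt_top ENNReal.ofReal_lt_top (hσ u).lt_top)).ne
  have hh_eq u : h u = (∫⁻ v in Ioi u, w v).toReal := by
    rw [hh, ← hH, ENNReal.toReal_mul, ENNReal.toReal_ofReal (Real.exp_pos _).le]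
  have hdiff u₁ u₂ (h12 : u₁ ≤ u₂) : h u₁ - h u₂ =
      ∫ u in Ioc u₁ u₂, Real.exp (-u) * (σ (Ioi (Real.exp u))).toReal := by
    simp only [hh_eq, ← hw]
    exact toReal_setLIntegral_Ioi_sub
      (measurable_ofReal_exp_neg_mul_measure_Ioi_exp σ).aemeasurable h12 (hH_ne_top u₁)
  refine ⟨fun u => ?_, hdiff,
    ae_hasDerivAt_of_sub_eq_integral (antitone_exp_neg_mul_toReal_measure_Ioi_exp hσ) hdiff⟩
  exact ENNReal.lt_top_of_mul_ne_top_right ((hH u).trans_ne (hH_ne_top u))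
    (ENNReal.ofReal_pos.mpr (Real.exp_pos _)).ne'

/-- With `ℓ(s) = ∫_{(s,∞)} r⁻¹ σ(dr)` and `h(u) = e^{-u} ∫_{e^u}^∞ ℓ(s) ds`, the function
`h` is finite and absolutely continuous on `ℝ`, with
`h(u₁) − h(u₂) = ∫_{u₁}^{u₂} e^{-u} σ((e^u,∞)) du` for `u₁ ≤ u₂`; in particular
`−h'(u) = e^{-u} σ((e^u,∞))` for a.e. `u`. -/
theorem stmt_14 (σ : Measure ℝ) (hσsupp : σ (Set.Ioi (0 : ℝ))ᶜ = 0)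
    (hσfin : ∫⁻ r, ENNReal.ofReal (min (r ^ 2) 1) ∂σ < ⊤)
    (ℓ : ℝ → ℝ≥0∞) (hℓ : ∀ s : ℝ, ℓ s = ∫⁻ r in Set.Ioi s, ENNReal.ofReal r⁻¹ ∂σ)
    (h : ℝ → ℝ)
    (hh : ∀ u : ℝ, h u = Real.exp (-u) * (∫⁻ s in Set.Ioi (Real.exp u), ℓ s).toReal) :
    (∀ u : ℝ, ∫⁻ s in Set.Ioi (Real.exp u), ℓ s < ⊤) ∧
    (∀ u₁ u₂ : ℝ, u₁ ≤ u₂ →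
      h u₁ - h u₂ =
        ∫ u in Set.Ioc u₁ u₂, Real.exp (-u) * (σ (Set.Ioi (Real.exp u))).toReal) ∧
    (∀ᵐ u : ℝ, HasDerivAt h (-(Real.exp (-u) * (σ (Set.Ioi (Real.exp u))).toReal)) u) :=
  stmt_14_general σ hσfin ℓ hℓ h hh
end

section
/- Let H be a Borel measure on [0,∞) with H([0,1]) = 0 and suppose ∫₀^1 r² (∫_{(1,∞)} (v−1) r^{−v} H(dv)) dr < ∞. Then H([3,∞)) = 0. -/
/-!
Every `v ≥ a` contributes at least `(a - 1) r^{-a} H([a,∞))` to the inner integral, so for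
`a ≥ 3` the integrand is at least `(a - 1) H([a,∞)) / r` on `(0,1)`. Since `1/r` is not
integrable at `0`, finiteness of the double integral forces `H([a,∞)) = 0`.
-/

open MeasureTheory Set

lemma lintegral_Ioo_zero_one_ofReal_inv : ∫⁻ r in Ioo (0 : ℝ) 1, ENNReal.ofReal r⁻¹ = ⊤ := by
  by_contra hfin
  have hint : IntegrableOn (fun r : ℝ => r⁻¹) (Ioo 0 1) := by
    refine ⟨by fun_prop, (hasFiniteIntegral_iff_ofReal ?_).2 (lt_top_iff_ne_top.2 hfin)⟩
    filter_upwards [ae_restrict_mem measurableSet_Ioo] with r hr using inv_nonneg.2 hr.1.le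
  rw [← integrableOn_Ioc_iff_integrableOn_Ioo,
    ← intervalIntegrable_iff_integrableOn_Ioc_of_le zero_le_one] at hint
  simp at hint

lemma mul_rpow_neg_le_mul_rpow_neg {r a v : ℝ} (hr0 : 0 < r) (hr1 : r ≤ 1) (ha : 1 ≤ a)
    (hav : a ≤ v) : (a - 1) * r ^ (-a) ≤ (v - 1) * r ^ (-v) :=
  mul_le_mul (by linarith) (Real.rpow_le_rpow_of_exponent_ge hr0 hr1 (by linarith))
    (Real.rpow_nonneg hr0.le _) (by linarith)

lemma inv_mul_le_sq_mul_mul_rpow_neg {r a : ℝ} (hr0 : 0 < r) (hr1 : r ≤ 1) (ha : 3 ≤ a) :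
    r⁻¹ * (a - 1) ≤ r ^ 2 * ((a - 1) * r ^ (-a)) := by
  have hpow : r⁻¹ ≤ r ^ 2 * r ^ (-a) := by
    rw [← Real.rpow_natCast, ← Real.rpow_add hr0, ← Real.rpow_neg_one]
    exact Real.rpow_le_rpow_of_exponent_ge hr0 hr1 (by push_cast; linarith)
  calc r⁻¹ * (a - 1) ≤ r ^ 2 * r ^ (-a) * (a - 1) :=
        mul_le_mul_of_nonneg_right hpow (by linarith)
    _ = r ^ 2 * ((a - 1) * r ^ (-a)) := by ring

lemma ofReal_mul_measure_Ici_le_setLIntegral_Ioi (H : Measure ℝ) {r a : ℝ} (hr0 : 0 < r)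
    (hr1 : r ≤ 1) (ha : 1 < a) :
    ENNReal.ofReal ((a - 1) * r ^ (-a)) * H (Ici a) ≤
      ∫⁻ v in Ioi 1, ENNReal.ofReal ((v - 1) * r ^ (-v)) ∂H :=
  calc ENNReal.ofReal ((a - 1) * r ^ (-a)) * H (Ici a)
      = ∫⁻ _ in Ici a, ENNReal.ofReal ((a - 1) * r ^ (-a)) ∂H := (setLIntegral_const _ _).symm
    _ ≤ ∫⁻ v in Ici a, ENNReal.ofReal ((v - 1) * r ^ (-v)) ∂H :=
      setLIntegral_mono' measurableSet_Ici fun _ hv =>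
        ENNReal.ofReal_le_ofReal (mul_rpow_neg_le_mul_rpow_neg hr0 hr1 ha.le hv)
    _ ≤ ∫⁻ v in Ioi 1, ENNReal.ofReal ((v - 1) * r ^ (-v)) ∂H :=
      lintegral_mono_set fun _ hv => ha.trans_le hv

lemma ofReal_inv_mul_le_sq_mul_setLIntegral_Ioi (H : Measure ℝ) {r a : ℝ} (hr0 : 0 < r)
    (hr1 : r ≤ 1) (ha : 3 ≤ a) :
    ENNReal.ofReal r⁻¹ * (ENNReal.ofReal (a - 1) * H (Ici a)) ≤
      ENNReal.ofReal (r ^ 2) * ∫⁻ v in Ioi 1, ENNReal.ofReal ((v - 1) * r ^ (-v)) ∂H :=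
  calc ENNReal.ofReal r⁻¹ * (ENNReal.ofReal (a - 1) * H (Ici a))
      = ENNReal.ofReal (r⁻¹ * (a - 1)) * H (Ici a) := by
        rw [ENNReal.ofReal_mul (inv_nonneg.2 hr0.le), mul_assoc]
    _ ≤ ENNReal.ofReal (r ^ 2 * ((a - 1) * r ^ (-a))) * H (Ici a) := by
        gcongr ?_ * _
        exact ENNReal.ofReal_le_ofReal (inv_mul_le_sq_mul_mul_rpow_neg hr0 hr1 ha)
    _ = ENNReal.ofReal (r ^ 2) * (ENNReal.ofReal ((a - 1) * r ^ (-a)) * H (Ici a)) := by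
        rw [ENNReal.ofReal_mul (sq_nonneg r), mul_assoc]
    _ ≤ _ := by
        gcongr
        exact ofReal_mul_measure_Ici_le_setLIntegral_Ioi H hr0 hr1 (by linarith)

theorem measure_Ici_eq_zero_of_lintegral_lt_top (H : Measure ℝ) {a : ℝ} (ha : 3 ≤ a)
    (hfin : ∫⁻ r in Ioo (0 : ℝ) 1,
        ENNReal.ofReal (r ^ 2) *
          ∫⁻ v in Ioi (1 : ℝ), ENNReal.ofReal ((v - 1) * r ^ (-v)) ∂H < ⊤) :
    H (Ici a) = 0 := by
  have hle := setLIntegral_mono' (μ := volume) measurableSet_Ioo fun r hr =>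
    ofReal_inv_mul_le_sq_mul_setLIntegral_Ioi H hr.1 hr.2.le ha
  rw [lintegral_mul_const _ (by fun_prop), lintegral_Ioo_zero_one_ofReal_inv] at hle
  by_contra hpos
  have hc : ENNReal.ofReal (a - 1) * H (Ici a) ≠ 0 :=
    mul_ne_zero (ENNReal.ofReal_pos.2 (by linarith)).ne' hpos
  rw [ENNReal.top_mul hc, top_le_iff] at hle
  exact hfin.ne hle

theorem stmt_17_general (H : Measure ℝ)
    (hfin : ∫⁻ r in Set.Ioo (0 : ℝ) 1,
        ENNReal.ofReal (r ^ 2) *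
          ∫⁻ v in Set.Ioi (1 : ℝ), ENNReal.ofReal ((v - 1) * r ^ (-v)) ∂H < ⊤) :
    H (Set.Ici (3 : ℝ)) = 0 :=
  measure_Ici_eq_zero_of_lintegral_lt_top H le_rfl hfin

/-- If `H` is a measure on `[0,∞)` with `H([0,1]) = 0` and
`∫₀^1 r² (∫_{(1,∞)} (v−1) r^{−v} H(dv)) dr < ∞`, then `H([3,∞)) = 0`. -/
theorem stmt_17 (H : Measure ℝ) (hH0 : H (Set.Iio 0) = 0) (hH1 : H (Set.Icc 0 1) = 0)
    (hfin : ∫⁻ r in Set.Ioo (0 : ℝ) 1,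
        ENNReal.ofReal (r ^ 2) *
          ∫⁻ v in Set.Ioi (1 : ℝ), ENNReal.ofReal ((v - 1) * r ^ (-v)) ∂H < ⊤) :
    H (Set.Ici (3 : ℝ)) = 0 :=
  stmt_17_general H hfin
end

section
/- Let ν be a Lévy measure on ℝ^d, let 0 < a < ∞, let f : (0,a) → ℝ be measurable with ∫₀^a f(s)² ds < ∞, and let z ∈ ℝ^d. Then ∫₀^a ∫_{ℝ^d} |e^{i⟨f(s)z, x⟩} − 1 − i⟨f(s)z, x⟩/(1 + |x|²)| ν(dx) ds < ∞. -/
/-!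
For `θ = ⟨u, x⟩` we have `|θ| ≤ ‖u‖ ‖x‖`, and the Lévy–Khintchine integrand is bounded by
`3 (‖u‖² + 1) min(‖x‖², 1)`: for `‖x‖ ≤ 1` by the second-order Taylor bound of `e^{iθ}` (the
compensator `iθ/(1 + ‖x‖²)` differs from `iθ` by `O(‖x‖²)`), for `‖x‖ > 1` because `e^{iθ} - 1`
is bounded by `2` and the compensator by `‖u‖`. Integrating against `ν` leaves the factor
`∫ min(‖x‖², 1) dν < ∞`, and the remaining `s`-integrand `3 f(s)² ‖z‖² + 3` is integrable over
the bounded interval `(0, a)` because `f` is square-integrable there.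
-/

open MeasureTheory Complex

lemma norm_exp_I_mul_sub_one_sub_le (θ : ℝ) : ‖exp (I * θ) - 1 - I * θ‖ ≤ 2 * θ ^ 2 := by
  have hIθ : ‖I * (θ : ℂ)‖ = |θ| := by simp
  rcases le_or_gt |θ| 1 with hθ | hθ
  · calc ‖exp (I * θ) - 1 - I * θ‖ ≤ ‖I * (θ : ℂ)‖ ^ 2 :=
          norm_exp_sub_one_sub_id_le (hIθ ▸ hθ)
      _ ≤ 2 * θ ^ 2 := by rw [hIθ, sq_abs]; nlinarith [sq_nonneg θ]
  · calc ‖exp (I * θ) - 1 - I * θ‖ ≤ ‖exp (I * θ) - 1‖ + ‖I * (θ : ℂ)‖ := norm_sub_le _ _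
      _ ≤ |θ| + |θ| := by rw [hIθ]; gcongr; simpa using Real.norm_exp_I_mul_ofReal_sub_one_le
      _ ≤ 2 * θ ^ 2 := by nlinarith [sq_abs θ]

lemma norm_exp_I_mul_sub_one_le_two (θ : ℝ) : ‖exp (I * θ) - 1‖ ≤ 2 := by
  rw [norm_exp_I_mul_ofReal_sub_one, norm_mul, Real.norm_ofNat]
  nlinarith [Real.abs_sin_le_one (θ / 2), Real.norm_eq_abs (Real.sin (θ / 2))]

lemma norm_exp_I_mul_sub_one_sub_div_le {θ c r : ℝ} (hr : 0 ≤ r) (hθ : |θ| ≤ c * r) :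
    ‖exp (I * θ) - 1 - I * θ / (1 + (r : ℂ) ^ 2)‖ ≤ (3 * c ^ 2 + 3) * min (r ^ 2) 1 := by
  have hr2 : (0 : ℝ) < 1 + r ^ 2 := by positivity
  have hr2C : (1 + (r : ℂ) ^ 2) = ((1 + r ^ 2 : ℝ) : ℂ) := by push_cast; rfl
  have hIθ : ‖I * (θ : ℂ)‖ = |θ| := by simp
  rcases le_or_gt r 1 with hr1 | hr1
  · rw [min_eq_left (by nlinarith)]
    have hsplit : exp (I * θ) - 1 - I * θ / (1 + (r : ℂ) ^ 2) =
        (exp (I * θ) - 1 - I * θ) + I * θ * ((r ^ 2 / (1 + r ^ 2) : ℝ) : ℂ) := by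
      have : (1 + (r : ℂ) ^ 2) ≠ 0 := by rw [hr2C]; exact_mod_cast hr2.ne'
      push_cast
      field_simp
      ring
    have hfrac : r ^ 2 / (1 + r ^ 2) ≤ r ^ 2 :=
      div_le_self (by positivity) (le_add_of_nonneg_right (sq_nonneg r))
    have hθc : |θ| ≤ (c ^ 2 + 1) / 2 := by nlinarith [sq_nonneg (c - 1), abs_nonneg θ]
    have hθ2 : θ ^ 2 ≤ c ^ 2 * r ^ 2 := by nlinarith [sq_abs θ, abs_nonneg θ]
    calc ‖exp (I * θ) - 1 - I * θ / (1 + (r : ℂ) ^ 2)‖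
        ≤ ‖exp (I * θ) - 1 - I * θ‖ + |θ| * (r ^ 2 / (1 + r ^ 2)) := by
          rw [hsplit]
          refine (norm_add_le _ _).trans_eq ?_
          rw [norm_mul, hIθ, norm_real, Real.norm_of_nonneg (by positivity)]
      _ ≤ 2 * (c ^ 2 * r ^ 2) + (c ^ 2 + 1) / 2 * r ^ 2 := by
          gcongr
          · exact (norm_exp_I_mul_sub_one_sub_le θ).trans (by gcongr)
      _ ≤ (3 * c ^ 2 + 3) * r ^ 2 := by nlinarith [sq_nonneg r, sq_nonneg (c * r)]
  · rw [min_eq_right (by nlinarith), mul_one]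
    have hc : 0 ≤ c := by nlinarith [abs_nonneg θ]
    calc ‖exp (I * θ) - 1 - I * θ / (1 + (r : ℂ) ^ 2)‖
        ≤ ‖exp (I * θ) - 1‖ + |θ| / (1 + r ^ 2) := by
          refine (norm_sub_le _ _).trans_eq ?_
          rw [norm_div, hIθ, hr2C, norm_real, Real.norm_of_nonneg hr2.le]
      _ ≤ 2 + c * r / (1 + r ^ 2) := by gcongr; exact norm_exp_I_mul_sub_one_le_two θ
      _ ≤ 3 * c ^ 2 + 3 := by
          have : c * r / (1 + r ^ 2) ≤ c := by
            rw [div_le_iff₀ hr2]; nlinarith [sq_nonneg (r - 1)]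
          nlinarith [sq_nonneg (c - 1)]

section LevyKhintchine

variable {E : Type*} [NormedAddCommGroup E] [InnerProductSpace ℝ E]

noncomputable def levyKhintchineIntegrand (u x : E) : ℂ :=
  exp (I * (inner ℝ u x : ℝ)) - 1 - I * (inner ℝ u x : ℝ) / (1 + (‖x‖ : ℂ) ^ 2)

lemma norm_levyKhintchineIntegrand_le (u x : E) :
    ‖levyKhintchineIntegrand u x‖ ≤ (3 * ‖u‖ ^ 2 + 3) * min (‖x‖ ^ 2) 1 :=
  norm_exp_I_mul_sub_one_sub_div_le (norm_nonneg x) (abs_real_inner_le_norm u x)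

lemma lintegral_norm_levyKhintchineIntegrand_le [MeasurableSpace E] (ν : Measure E) (u : E) :
    ∫⁻ x, ENNReal.ofReal ‖levyKhintchineIntegrand u x‖ ∂ν ≤
      ENNReal.ofReal (3 * ‖u‖ ^ 2 + 3) * ∫⁻ x, ENNReal.ofReal (min (‖x‖ ^ 2) 1) ∂ν := by
  rw [← lintegral_const_mul' _ _ ENNReal.ofReal_ne_top]
  refine lintegral_mono fun x => ?_
  rw [← ENNReal.ofReal_mul (by positivity)]
  exact ENNReal.ofReal_le_ofReal (norm_levyKhintchineIntegrand_le u x)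

end LevyKhintchine

lemma lintegral_ofReal_mul_sq_add_lt_top {α : Type*} [MeasurableSpace α] {μ : Measure α}
    [IsFiniteMeasure μ] {f : α → ℝ} (hf : ∫⁻ s, ENNReal.ofReal (f s ^ 2) ∂μ < ⊤)
    {A : ℝ} (hA : 0 ≤ A) (B : ℝ) :
    ∫⁻ s, ENNReal.ofReal (A * f s ^ 2 + B) ∂μ < ⊤ := by
  calc ∫⁻ s, ENNReal.ofReal (A * f s ^ 2 + B) ∂μ
      ≤ ∫⁻ s, (ENNReal.ofReal A * ENNReal.ofReal (f s ^ 2) + ENNReal.ofReal B) ∂μ :=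
        lintegral_mono fun s => (ENNReal.ofReal_add_le).trans_eq (by rw [ENNReal.ofReal_mul hA])
    _ = ENNReal.ofReal A * ∫⁻ s, ENNReal.ofReal (f s ^ 2) ∂μ + ENNReal.ofReal B * μ Set.univ := by
        rw [lintegral_add_right _ measurable_const, lintegral_const,
          lintegral_const_mul' _ _ ENNReal.ofReal_ne_top]
    _ < ⊤ := by finiteness

theorem stmt_19_general (d : ℕ)
    (ν : Measure (EuclideanSpace ℝ (Fin d)))
    (hνfin : ∫⁻ x, ENNReal.ofReal (min (‖x‖ ^ 2) 1) ∂ν < ⊤)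
    (a : ℝ) (f : ℝ → ℝ)
    (hf2 : ∫⁻ s in Set.Ioo 0 a, ENNReal.ofReal (f s ^ 2) < ⊤)
    (z : EuclideanSpace ℝ (Fin d)) :
    ∫⁻ s in Set.Ioo (0 : ℝ) a, ∫⁻ x, ENNReal.ofReal (‖
        (Complex.exp (Complex.I * ((inner ℝ (f s • z) x : ℝ) : ℂ)) - 1 -
          Complex.I * ((inner ℝ (f s • z) x : ℝ) : ℂ) / (1 + (‖x‖ : ℂ) ^ 2))‖) ∂ν < ⊤ := by
  have hnorm (s : ℝ) : 3 * ‖f s • z‖ ^ 2 + 3 = 3 * ‖z‖ ^ 2 * f s ^ 2 + 3 := by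
    rw [norm_smul, Real.norm_eq_abs, mul_pow, sq_abs]; ring
  calc _ ≤ ∫⁻ s in Set.Ioo 0 a, ENNReal.ofReal (3 * ‖f s • z‖ ^ 2 + 3) *
          ∫⁻ x, ENNReal.ofReal (min (‖x‖ ^ 2) 1) ∂ν :=
        lintegral_mono fun s => lintegral_norm_levyKhintchineIntegrand_le ν (f s • z)
    _ = (∫⁻ s in Set.Ioo 0 a, ENNReal.ofReal (3 * ‖z‖ ^ 2 * f s ^ 2 + 3)) *
          ∫⁻ x, ENNReal.ofReal (min (‖x‖ ^ 2) 1) ∂ν := by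
        simp_rw [hnorm]
        exact lintegral_mul_const' _ _ hνfin.ne
    _ < ⊤ := ENNReal.mul_lt_top (lintegral_ofReal_mul_sq_add_lt_top hf2 (by positivity) 3) hνfin

/-- Integrability of the Lévy–Khintchine integrand along a square-integrable kernel:
`∫₀^a ∫ |g(f(s)z, x)| ν(dx) ds < ∞`. -/
theorem stmt_19 (d : ℕ) (hd : 1 ≤ d)
    (ν : Measure (EuclideanSpace ℝ (Fin d)))
    (hν0 : ν {0} = 0)
    (hνfin : ∫⁻ x, ENNReal.ofReal (min (‖x‖ ^ 2) 1) ∂ν < ⊤)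
    (a : ℝ) (ha : 0 < a) (f : ℝ → ℝ) (hf : Measurable f)
    (hf2 : ∫⁻ s in Set.Ioo 0 a, ENNReal.ofReal (f s ^ 2) < ⊤)
    (z : EuclideanSpace ℝ (Fin d)) :
    ∫⁻ s in Set.Ioo (0 : ℝ) a, ∫⁻ x, ENNReal.ofReal (‖
        (Complex.exp (Complex.I * ((inner ℝ (f s • z) x : ℝ) : ℂ)) - 1 -
          Complex.I * ((inner ℝ (f s • z) x : ℝ) : ℂ) / (1 + (‖x‖ : ℂ) ^ 2))‖) ∂ν < ⊤ :=
  stmt_19_general d ν hνfin a f hf2 z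
end
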